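/- arXiv:2406.05226 — 5 statements merged into one kernel-verified Lean document; each statement's English description precedes it below -/
import Mathlib

section
/- Let m and n be even. There is no walk in the knight's graph on the strip {0,...,m-1}×Z that starts at (0,0), ends at (m-1,n) or (m-1,-n), and has even length. Consequently, no generating knight's tour exists on the m×n Möbius strip board when m and n are both even. -/
/-- The knight's move graph on `ℤ × ℤ`. -/
def knightGraph : SimpleGraph (ℤ × ℤ) where
  Adj p q := (|p.1 - q.1| = 1 ∧ |p.2 - q.2| = 2) ∨ (|p.1 - q.1| = 2 ∧ |p.2 - q.2| = 1)
  symm := by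
    constructor
    intro p q h
    rcases h with ⟨h1, h2⟩ | ⟨h1, h2⟩
    · exact Or.inl ⟨by rw [abs_sub_comm]; exact h1, by rw [abs_sub_comm]; exact h2⟩
    · exact Or.inr ⟨by rw [abs_sub_comm]; exact h1, by rw [abs_sub_comm]; exact h2⟩
  loopless := by
    constructor
    intro p h
    rcases h with ⟨h1, _⟩ | ⟨h1, _⟩ <;> simp at h1

/-- The covering map from the plane (or the width-`m` strip) to the `m × n`
Möbius strip / Klein bottle board: `(a,b) ↦ ((-1)^(b div n) · a mod m, b mod n)`. -/
def phi (m n : ℕ) (p : ℤ × ℤ) : ℤ × ℤ :=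
  ((if Even (p.2 / (n : ℤ)) then p.1 else -p.1) % (m : ℤ), p.2 % (n : ℤ))

/-- The `m × n` board, as a set of integer points. -/
def boardSet (m n : ℕ) : Set (ℤ × ℤ) :=
  {p | 0 ≤ p.1 ∧ p.1 < (m : ℤ) ∧ 0 ≤ p.2 ∧ p.2 < (n : ℤ)}

lemma knight_adj_odd {p q : ℤ × ℤ} (h : knightGraph.Adj p q) :
    Odd (p.1 + p.2 - (q.1 + q.2)) := by
  rcases h with ⟨h1, h2⟩ | ⟨h1, h2⟩ <;>
    rcases abs_eq (by norm_num : (0:ℤ) ≤ 1) |>.mp ‹_› with h | h <;>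
    rcases abs_eq (by norm_num : (0:ℤ) ≤ 2) |>.mp ‹_› with h' | h' <;>
    · rw [Int.odd_iff]; omega

lemma knight_walk_parity {u v : ℤ × ℤ} (w : knightGraph.Walk u v) :
    Even (u.1 + u.2 + w.length - (v.1 + v.2)) := by
  induction w with
  | nil => simp
  | cons h w ih =>
      have := knight_adj_odd h
      rw [Int.even_iff] at ih ⊢
      rw [Int.odd_iff] at this
      simp only [SimpleGraph.Walk.length_cons] at *
      push_cast
      omega

/-- For `m, n` both even: there is no even-length walk in the knight's graph on the
width-`m` strip from `(0,0)` to `(m-1, ±n)`; consequently, there is no generating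
knight's tour on the `m × n` Möbius strip board (a closed tour whose lift to the strip
starting at `(0,0)` ends at `(m-1, ±n)`). -/
theorem no_generating_tour_of_even_even (m n : ℕ) (hm : Even m) (hn : Even n)
    (hm0 : 0 < m) (hn0 : 0 < n) :
    (¬ ∃ (e : ℤ × ℤ) (w : knightGraph.Walk ((0 : ℤ), (0 : ℤ)) e),
        (e = ((m : ℤ) - 1, (n : ℤ)) ∨ e = ((m : ℤ) - 1, -(n : ℤ))) ∧
        (∀ p ∈ w.support, 0 ≤ p.1 ∧ p.1 < (m : ℤ)) ∧ Even w.length) ∧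
    (¬ ∃ (e : ℤ × ℤ) (w : knightGraph.Walk ((0 : ℤ), (0 : ℤ)) e),
        (e = ((m : ℤ) - 1, (n : ℤ)) ∨ e = ((m : ℤ) - 1, -(n : ℤ))) ∧
        (∀ p ∈ w.support, 0 ≤ p.1 ∧ p.1 < (m : ℤ)) ∧ w.length = m * n ∧
        ∀ q ∈ boardSet m n, ∃! i : Fin (m * n), phi m n (w.getVert i) = q) := by
  have key : ¬ ∃ (e : ℤ × ℤ) (w : knightGraph.Walk ((0 : ℤ), (0 : ℤ)) e),
      (e = ((m : ℤ) - 1, (n : ℤ)) ∨ e = ((m : ℤ) - 1, -(n : ℤ))) ∧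
      (∀ p ∈ w.support, 0 ≤ p.1 ∧ p.1 < (m : ℤ)) ∧ Even w.length := by
    rintro ⟨e, w, he, -, hlen⟩
    have hp := knight_walk_parity w
    obtain ⟨a, ha⟩ := hm
    obtain ⟨b, hb⟩ := hn
    obtain ⟨k, hk⟩ := hlen
    rw [Int.even_iff] at hp
    rcases he with rfl | rfl <;> simp only [] at hp <;> push_cast [ha, hb, hk] at hp <;> omega
  refine ⟨key, ?_⟩
  rintro ⟨e, w, he, hs, hlen, -⟩
  exact key ⟨e, w, he, hs, hlen ▸ (hm.mul_right n)⟩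
end

section
/- The Möbius knight's graph M(2,n) for n odd is a cycle of length 2n. -/
/-- Adjacency in the Möbius knight's graph `M(m,n)`: two board squares are adjacent iff
some knight move in the width-`m` strip projects onto them under the covering map. -/
def mobiusAdj (m n : ℕ) (u v : ℤ × ℤ) : Prop :=
  ∃ p q : ℤ × ℤ, 0 ≤ p.1 ∧ p.1 < (m : ℤ) ∧ 0 ≤ q.1 ∧ q.1 < (m : ℤ) ∧
    phi m n p = u ∧ phi m n q = v ∧ knightGraph.Adj p q

lemma emod_sub_self_dvd (d x : ℤ) : d ∣ x % d - x :=
  ⟨-(x / d), by have := Int.mul_ediv_add_emod x d; linarith⟩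

lemma odd_dvd_of_dvd_two_mul (n m : ℤ) (hodd : n % 2 = 1) (h : n ∣ 2 * m) : n ∣ m := by
  obtain ⟨c, hc⟩ : ∃ c, n + 1 = 2 * c := ⟨(n + 1) / 2, by omega⟩
  have h2 : n ∣ n * m + m := by
    have h3 := h.mul_right c
    have e : 2 * m * c = n * m + m := by linear_combination (-m) * hc
    rwa [e] at h3
  exact (dvd_add_right ⟨m, rfl⟩).mp h2

lemma two_mul_dvd (n c : ℤ) (hodd : n % 2 = 1) (h1 : n ∣ c) (h2 : (2:ℤ) ∣ c) : 2 * n ∣ c := by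
  obtain ⟨d, rfl⟩ := h1
  rcases Int.even_mul.mp (even_iff_two_dvd.mpr h2) with h | h
  · exact absurd (Int.even_iff.mp h) (by omega)
  · obtain ⟨e, rfl⟩ := h
    exact ⟨e, by ring⟩

lemma mobiusAdj_char (n : ℕ) (hn0 : 0 < n) (u v : ℤ × ℤ)
    (hu : u ∈ boardSet 2 n) (hv : v ∈ boardSet 2 n) :
    mobiusAdj 2 n u v ↔ u.1 = 1 - v.1 ∧
      ((n:ℤ) ∣ v.2 - u.2 - 2 ∨ (n:ℤ) ∣ v.2 - u.2 + 2) := by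
  obtain ⟨hu1, hu2, hu3, hu4⟩ := hu
  obtain ⟨hv1, hv2, hv3, hv4⟩ := hv
  constructor
  · rintro ⟨p, q, hp0, hp2, hq0, hq2, hpu, hqv, hadj⟩
    have hu1' : p.1 = u.1 := by
      have h := congrArg Prod.fst hpu
      simp only [phi] at h
      split at h <;> omega
    have hv1' : q.1 = v.1 := by
      have h := congrArg Prod.fst hqv
      simp only [phi] at h
      split at h <;> omega
    have hu2' : p.2 % (n:ℤ) = u.2 := congrArg Prod.snd hpu
    have hv2' : q.2 % (n:ℤ) = v.2 := congrArg Prod.snd hqv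
    rcases hadj with ⟨h1, h2⟩ | ⟨h1, h2⟩
    · rw [abs_eq (by norm_num : (0:ℤ) ≤ 1)] at h1
      rw [abs_eq (by norm_num : (0:ℤ) ≤ 2)] at h2
      refine ⟨by omega, ?_⟩
      rcases h2 with h2 | h2
      · right
        have e : v.2 - u.2 + 2 = (q.2 % (n:ℤ) - q.2) - (p.2 % (n:ℤ) - p.2) := by
          rw [hu2', hv2'] at *; linarith
        rw [e]
        exact dvd_sub (emod_sub_self_dvd _ _) (emod_sub_self_dvd _ _)
      · left
        have e : v.2 - u.2 - 2 = (q.2 % (n:ℤ) - q.2) - (p.2 % (n:ℤ) - p.2) := by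
          rw [hu2', hv2'] at *; linarith
        rw [e]
        exact dvd_sub (emod_sub_self_dvd _ _) (emod_sub_self_dvd _ _)
    · rw [abs_eq (by norm_num : (0:ℤ) ≤ 2)] at h1
      exact absurd h1 (by omega)
  · rintro ⟨h1, h2 | h2⟩
    · refine ⟨(u.1, u.2), (v.1, u.2 + 2), hu1, hu2, hv1, hv2, ?_, ?_, Or.inl ⟨?_, ?_⟩⟩
      · refine Prod.ext ?_ ?_ <;> simp only [phi]
        · split <;> omega
        · exact Int.emod_eq_of_lt hu3 hu4
      · refine Prod.ext ?_ ?_ <;> simp only [phi]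
        · split <;> omega
        · have : (u.2 + 2) % (n:ℤ) = v.2 % (n:ℤ) :=
            Int.ModEq.symm (Int.modEq_iff_dvd.mpr (by
              have e2 : u.2 + 2 - v.2 = -(v.2 - u.2 - 2) := by ring
              rw [e2]; exact dvd_neg.mpr h2))
          rw [this, Int.emod_eq_of_lt hv3 hv4]
      · rw [abs_eq (by norm_num : (0:ℤ) ≤ 1)]; omega
      · simp
    · refine ⟨(u.1, u.2), (v.1, u.2 - 2), hu1, hu2, hv1, hv2, ?_, ?_, Or.inl ⟨?_, ?_⟩⟩
      · refine Prod.ext ?_ ?_ <;> simp only [phi]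
        · split <;> omega
        · exact Int.emod_eq_of_lt hu3 hu4
      · refine Prod.ext ?_ ?_ <;> simp only [phi]
        · split <;> omega
        · have : (u.2 - 2) % (n:ℤ) = v.2 % (n:ℤ) :=
            Int.ModEq.symm (Int.modEq_iff_dvd.mpr (by
              have e2 : u.2 - 2 - v.2 = -(v.2 - u.2 + 2) := by ring
              rw [e2]; exact dvd_neg.mpr h2))
          rw [this, Int.emod_eq_of_lt hv3 hv4]
      · rw [abs_eq (by norm_num : (0:ℤ) ≤ 1)]; omega
      · rw [abs_eq (by norm_num : (0:ℤ) ≤ 2)]; omega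

def fcyc (n : ℕ) (i : ZMod (2 * n)) : ℤ × ℤ :=
  (((i.val : ℤ)) % 2, (2 * (i.val : ℤ)) % (n : ℤ))

lemma fcyc_cast (n : ℕ) (hn0 : 0 < n) (k : ℤ) :
    fcyc n (k : ZMod (2 * n)) = (k % 2, (2 * k) % (n : ℤ)) := by
  haveI : NeZero (2 * n) := ⟨by omega⟩
  have hval : (((k : ZMod (2 * n)).val : ℤ)) = k % ((2 * n : ℕ) : ℤ) := ZMod.val_intCast k
  have hcast : ((2 * n : ℕ) : ℤ) = 2 * (n : ℤ) := by push_cast; ring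
  rw [hcast] at hval
  unfold fcyc
  rw [hval]
  refine Prod.ext ?_ ?_
  · show k % (2 * (n:ℤ)) % 2 = k % 2
    exact Int.emod_emod_of_dvd k ⟨(n:ℤ), by ring⟩
  · show (2 * (k % (2 * (n:ℤ)))) % (n:ℤ) = (2 * k) % (n:ℤ)
    have h1 : k % (2 * (n:ℤ)) ≡ k [ZMOD (n:ℤ)] :=
      Int.emod_emod_of_dvd k ⟨2, by ring⟩
    exact h1.mul_left 2

lemma zmod_cast_val (n : ℕ) (hn0 : 0 < n) (i : ZMod (2 * n)) :
    (((i.val : ℤ)) : ZMod (2 * n)) = i := by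
  haveI : NeZero (2 * n) := ⟨by omega⟩
  push_cast [ZMod.natCast_val, ZMod.cast_id]
  rfl


/-- For `n` odd, the Möbius knight's graph `M(2,n)` is a cycle of length `2n`: its `2n`
vertices can be enumerated cyclically so that consecutive vertices are adjacent and all
adjacencies are between consecutive vertices. -/
theorem mobius_two_is_cycle (n : ℕ) (hn : Odd n) (hn0 : 0 < n) :
    ∃ f : ZMod (2 * n) → ℤ × ℤ,
      Function.Injective f ∧
      (∀ i, f i ∈ boardSet 2 n) ∧
      (∀ q ∈ boardSet 2 n, ∃ i, f i = q) ∧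
      (∀ i, mobiusAdj 2 n (f i) (f (i + 1))) ∧
      (∀ i j, mobiusAdj 2 n (f i) (f j) → j = i + 1 ∨ j = i - 1) := by
  haveI : NeZero (2 * n) := ⟨by omega⟩
  have hn2 : (n : ℤ) % 2 = 1 := by
    have := Nat.odd_iff.mp hn; omega
  have hnpos : (0 : ℤ) < (n : ℤ) := by exact_mod_cast hn0
  have hmem : ∀ i, fcyc n i ∈ boardSet 2 n := by
    intro i
    refine ⟨Int.emod_nonneg _ (by norm_num), ?_, Int.emod_nonneg _ (by omega), ?_⟩
    · exact Int.emod_lt_of_pos _ (by norm_num)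
    · exact Int.emod_lt_of_pos _ hnpos
  refine ⟨fcyc n, ?_, hmem, ?_, ?_, ?_⟩
  -- Injectivity
  · intro i j hij
    set a : ℤ := (i.val : ℤ) with ha
    set b : ℤ := (j.val : ℤ) with hb
    have h1 : a % 2 = b % 2 := congrArg Prod.fst hij
    have h2 : (2 * a) % (n:ℤ) = (2 * b) % (n:ℤ) := congrArg Prod.snd hij
    have e : 2 * b - 2 * a = -((2 * b) % (n:ℤ) - 2 * b) + ((2 * a) % (n:ℤ) - 2 * a) := by
      rw [h2]; ring
    have hd1 : (n:ℤ) ∣ 2 * b - 2 * a := by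
      rw [e]
      exact dvd_add (dvd_neg.mpr (emod_sub_self_dvd _ _)) (emod_sub_self_dvd _ _)
    have hd2 : (n:ℤ) ∣ b - a :=
      odd_dvd_of_dvd_two_mul _ _ hn2 (by rw [show 2*(b-a) = 2*b-2*a by ring]; exact hd1)
    have h2par : (2:ℤ) ∣ b - a := by omega
    have hd3 : 2 * (n:ℤ) ∣ b - a := two_mul_dvd _ _ hn2 hd2 h2par
    have hvi : i.val < 2 * n := ZMod.val_lt i
    have hvj : j.val < 2 * n := ZMod.val_lt j
    have hab : a = b := by
      obtain ⟨c, hc⟩ := hd3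
      rcases lt_trichotomy c 0 with h | h | h
      · nlinarith [ha, hb]
      · rw [h] at hc; omega
      · nlinarith
    have : i.val = j.val := by omega
    exact ZMod.val_injective _ this
  -- Surjectivity
  · rintro ⟨x, y⟩ ⟨hx0, hx1, hy0, hy1⟩
    simp only at hx0 hx1 hy0 hy1
    set k0 : ℤ := if y % 2 = 0 then y / 2 else (y + n) / 2 with hk0def
    have hk0 : 2 * k0 = y ∨ 2 * k0 = y + n := by
      rw [hk0def]; split
      · left; omega
      · right; omega
    set k : ℤ := if k0 % 2 = x then k0 else k0 + n with hkdef
    have hkpar : k % 2 = x := by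
      rw [hkdef]; split
      · assumption
      · omega
    have hk2 : (2 * k) % (n:ℤ) = y := by
      have : ∃ t : ℤ, 2 * k = y + (n:ℤ) * t := by
        rw [hkdef]; split
        · rcases hk0 with h | h
          · exact ⟨0, by omega⟩
          · exact ⟨1, by omega⟩
        · rcases hk0 with h | h
          · exact ⟨2, by omega⟩
          · exact ⟨3, by omega⟩
      obtain ⟨t, ht⟩ := this
      rw [ht, Int.add_mul_emod_self_left, Int.emod_eq_of_lt hy0 hy1]
    exact ⟨(k : ZMod (2 * n)), by rw [fcyc_cast n hn0 k, hkpar, hk2]⟩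
  -- Consecutive adjacency
  · intro i
    set a : ℤ := (i.val : ℤ) with ha
    have hi1 : i + 1 = ((a + 1 : ℤ) : ZMod (2 * n)) := by
      push_cast [zmod_cast_val n hn0 i]
      rw [ha, zmod_cast_val n hn0 i]
    have hfi : fcyc n i = (a % 2, (2 * a) % (n:ℤ)) := rfl
    have hfi1 : fcyc n (i + 1) = ((a + 1) % 2, (2 * (a + 1)) % (n:ℤ)) := by
      rw [hi1, fcyc_cast n hn0]
    rw [(mobiusAdj_char n hn0 _ _ (hmem i) (hmem (i + 1)))]
    rw [hfi, hfi1]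
    refine ⟨by simp only; omega, Or.inl ?_⟩
    simp only
    have e : (2 * (a + 1)) % (n:ℤ) - (2 * a) % (n:ℤ) - 2 =
        ((2 * a + 2) % (n:ℤ) - (2 * a + 2)) - ((2 * a) % (n:ℤ) - (2 * a)) := by ring_nf
    rw [e]
    exact dvd_sub (emod_sub_self_dvd _ _) (emod_sub_self_dvd _ _)
  -- Uniqueness
  · intro i j hadj
    rw [mobiusAdj_char n hn0 _ _ (hmem i) (hmem j)] at hadj
    set a : ℤ := (i.val : ℤ) with ha
    set b : ℤ := (j.val : ℤ) with hb
    obtain ⟨h1, h2⟩ := hadj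
    have h1' : a % 2 = 1 - b % 2 := h1
    have key : ∀ c : ℤ, (2 * (n:ℤ)) ∣ c → ((c : ZMod (2 * n)) = 0) := by
      intro c hc
      rw [ZMod.intCast_zmod_eq_zero_iff_dvd]
      push_cast
      exact hc
    rcases h2 with h2 | h2
    · -- (2b)%n - (2a)%n - 2 divisible  ⇒ j = i + 1
      left
      have e : 2 * (b - a - 1) =
          ((2 * b) % (n:ℤ) - 2 * b) * (-1) + ((2 * a) % (n:ℤ) - 2 * a) +
          ((2 * b) % (n:ℤ) - (2 * a) % (n:ℤ) - 2) := by ring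
      have hd : (n:ℤ) ∣ 2 * (b - a - 1) := by
        rw [e]
        exact dvd_add (dvd_add ((emod_sub_self_dvd _ _).mul_right _) (emod_sub_self_dvd _ _)) h2
      have hd2 : (n:ℤ) ∣ b - a - 1 := odd_dvd_of_dvd_two_mul _ _ hn2 hd
      have hpar : (2:ℤ) ∣ b - a - 1 := by omega
      have hd3 : 2 * (n:ℤ) ∣ b - a - 1 := two_mul_dvd _ _ hn2 hd2 hpar
      have hz := key _ hd3
      push_cast [ha, hb, zmod_cast_val n hn0] at hz
      linear_combination hz
    · right
      have e : 2 * (b - a + 1) =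
          ((2 * b) % (n:ℤ) - 2 * b) * (-1) + ((2 * a) % (n:ℤ) - 2 * a) +
          ((2 * b) % (n:ℤ) - (2 * a) % (n:ℤ) + 2) := by ring
      have hd : (n:ℤ) ∣ 2 * (b - a + 1) := by
        rw [e]
        exact dvd_add (dvd_add ((emod_sub_self_dvd _ _).mul_right _) (emod_sub_self_dvd _ _)) h2
      have hd2 : (n:ℤ) ∣ b - a + 1 := odd_dvd_of_dvd_two_mul _ _ hn2 hd
      have hpar : (2:ℤ) ∣ b - a + 1 := by omega
      have hd3 : 2 * (n:ℤ) ∣ b - a + 1 := two_mul_dvd _ _ hn2 hd2 hpar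
      have hz := key _ hd3
      push_cast [ha, hb, zmod_cast_val n hn0] at hz
      linear_combination hz
end

section
/- In any closed knight's tour on the 3×2 Möbius strip board, the lift to the strip {0,1,2}×Z starting at a vertex with first coordinate 0 ends at a vertex with first coordinate 0. In particular, there is no generating tour on the 3×2 Möbius strip board. -/
lemma phi_mem_board (p : ℤ × ℤ) : phi 3 2 p ∈ boardSet 3 2 := by
  simp only [phi, boardSet, Set.mem_setOf_eq, Nat.cast_ofNat]
  generalize (if Even (p.2 / (2:ℤ)) then p.1 else -p.1) = x
  refine ⟨by omega, by omega, by omega, by omega⟩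

lemma phi12 (b b' : ℤ) (h : b' = b + 2 ∨ b' = b - 2) :
    phi 3 2 (1, b) = phi 3 2 (2, b') := by
  have hev : Even (b' / 2) ↔ ¬ Even (b / 2) := by
    rw [Int.even_iff, Int.even_iff]; omega
  simp only [phi, Nat.cast_ofNat]
  by_cases hb : Even (b / 2)
  · rw [if_pos hb, if_neg (fun hh => (hev.mp hh) hb)]
    simp only [Prod.mk.injEq]; omega
  · rw [if_neg hb, if_pos (hev.mpr hb)]
    simp only [Prod.mk.injEq]; omega

lemma key (v1 v2 : ℤ × ℤ) (h1 : knightGraph.Adj (0, 0) v1) (h2 : knightGraph.Adj v1 v2)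
    (hr1 : 0 ≤ v1.1 ∧ v1.1 < 3) (hr2 : 0 ≤ v2.1 ∧ v2.1 < 3) :
    phi 3 2 v2 = phi 3 2 ((0 : ℤ), (0 : ℤ)) ∨ phi 3 2 v2 = phi 3 2 v1 := by
  obtain ⟨a1, b1⟩ := v1
  obtain ⟨a2, b2⟩ := v2
  simp only at hr1 hr2
  replace h1 : (|(0:ℤ) - a1| = 1 ∧ |(0:ℤ) - b1| = 2) ∨ (|(0:ℤ) - a1| = 2 ∧ |(0:ℤ) - b1| = 1) := h1
  replace h2 : (|a1 - a2| = 1 ∧ |b1 - b2| = 2) ∨ (|a1 - a2| = 2 ∧ |b1 - b2| = 1) := h2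
  rcases h1 with ⟨hx1, hy1⟩ | ⟨hx1, hy1⟩ <;>
    rw [abs_eq (by norm_num)] at hx1 hy1 <;>
  rcases h2 with ⟨hx2, hy2⟩ | ⟨hx2, hy2⟩ <;>
    rw [abs_eq (by norm_num)] at hx2 hy2 <;>
  · have hcase : (a2 = 0 ∧ b2 % 2 = 0) ∨
        ((a1 = 1 ∧ a2 = 2 ∨ a1 = 2 ∧ a2 = 1) ∧ (b2 = b1 + 2 ∨ b2 = b1 - 2)) := by omega
    rcases hcase with ⟨ha2, hb2⟩ | ⟨hcol, hb⟩
    · left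
      subst ha2
      simp only [phi, Nat.cast_ofNat, neg_zero, ite_self, Prod.mk.injEq, true_and]
      omega
    · right
      rcases hcol with ⟨ha1, ha2⟩ | ⟨ha1, ha2⟩
      · subst ha1; subst ha2
        exact (phi12 b1 b2 hb).symm
      · subst ha1; subst ha2
        exact phi12 b2 b1 (by omega)

/-- Any lift to the strip `{0,1,2} × ℤ` of a closed knight's tour of the `3 × 2` Möbius
strip board that starts at a vertex with first coordinate `0` ends at a vertex with
first coordinate `0`.  In particular there is no generating tour on the `3 × 2` Möbius
strip board (no tour lifting from `(0,0)` to `(2, ±2)`). -/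
theorem mobius_three_two_no_generating :
    (∀ (b : ℤ) (e : ℤ × ℤ) (w : knightGraph.Walk ((0 : ℤ), b) e),
      (∀ p ∈ w.support, 0 ≤ p.1 ∧ p.1 < 3) →
      w.length = 6 →
      phi 3 2 ((0 : ℤ), b) = phi 3 2 e →
      (∀ q ∈ boardSet 3 2, ∃! i : Fin 6, phi 3 2 (w.getVert i) = q) →
      e.1 = 0) ∧
    (¬ ∃ (e : ℤ × ℤ) (w : knightGraph.Walk ((0 : ℤ), (0 : ℤ)) e),
      (e = ((2 : ℤ), (2 : ℤ)) ∨ e = ((2 : ℤ), (-2 : ℤ))) ∧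
      (∀ p ∈ w.support, 0 ≤ p.1 ∧ p.1 < 3) ∧ w.length = 6 ∧
      ∀ q ∈ boardSet 3 2, ∃! i : Fin 6, phi 3 2 (w.getVert i) = q) := by
  constructor
  · intro b e w hsup _ hphi _
    have he := hsup e w.end_mem_support
    have h := congrArg Prod.fst hphi
    simp only [phi, neg_zero, ite_self, Nat.cast_ofNat, Int.zero_emod] at h
    by_cases hc : Even (e.2 / (2:ℤ))
    · rw [if_pos hc] at h; omega
    · rw [if_neg hc] at h; omega
  · rintro ⟨e, w, _, hsup, hlen, htour⟩
    cases w with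
    | nil => simp at hlen
    | @cons _ v1 _ h1 w1 =>
      cases w1 with
      | nil => simp at hlen
      | @cons _ v2 _ h2 w2 =>
        have hv1 := hsup v1 (by simp)
        have hv2 := hsup v2 (by simp)
        set W := SimpleGraph.Walk.cons h1 (SimpleGraph.Walk.cons h2 w2) with hW
        have hinj : ∀ i j : Fin 6,
            phi 3 2 (W.getVert i) = phi 3 2 (W.getVert j) → i = j := by
          intro i j hij
          obtain ⟨k, -, hk⟩ := htour (phi 3 2 (W.getVert j)) (phi_mem_board _)
          rw [hk i hij, hk j rfl]
        have g0 : W.getVert 0 = ((0 : ℤ), (0 : ℤ)) := rfl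
        have g1 : W.getVert 1 = v1 := rfl
        have g2 : W.getVert 2 = v2 := SimpleGraph.Walk.getVert_zero w2
        rcases key v1 v2 h1 h2 hv1 hv2 with h | h
        · have : (2 : Fin 6) = 0 := by
            apply hinj
            show phi 3 2 (W.getVert 2) = phi 3 2 (W.getVert 0)
            rw [g2, g0]; exact h
          simp at this
        · have : (2 : Fin 6) = 1 := by
            apply hinj
            show phi 3 2 (W.getVert 2) = phi 3 2 (W.getVert 1)
            rw [g2, g1]; exact h
          simp at this
end

section
/- For every pair of positive integers m and n with both m,n ≥ 5, at least one of them > 5, and at least one of m,n even, the m×n Möbius strip board admits a nullhomotopic closed knight's tour; and if both m and n are odd (with at least one > 1), it admits none. -/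
-- ------------------------------------------------------------------
-- Auxiliary development
-- ------------------------------------------------------------------

instance : DecidableRel knightGraph.Adj := fun p q =>
  decidable_of_iff ((|p.1 - q.1| = 1 ∧ |p.2 - q.2| = 2) ∨ (|p.1 - q.1| = 2 ∧ |p.2 - q.2| = 1)) Iff.rfl

instance (m n : ℕ) (p : ℤ × ℤ) : Decidable (p ∈ boardSet m n) :=
  decidable_of_iff (0 ≤ p.1 ∧ p.1 < (m : ℤ) ∧ 0 ≤ p.2 ∧ p.2 < (n : ℤ)) Iff.rfl

abbrev Pt := ℤ × ℤ

/-- cyclic chain -/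
def CC (l : List Pt) : Prop :=
  l.Chain' knightGraph.Adj ∧ ∀ x ∈ l.getLast?, ∀ y ∈ l.head?, knightGraph.Adj x y

/-- directed cyclic edge -/
def CEd (l : List Pt) (u v : Pt) : Prop :=
  ∃ i, i < l.length ∧ l[i]? = some u ∧ l[(i+1) % l.length]? = some v

def CE (l : List Pt) (u v : Pt) : Prop := CEd l u v ∨ CEd l v u

lemma CE.symm {l u v} (h : CE l u v) : CE l v u := h.elim Or.inr Or.inl

lemma CC_rot1 {l : List Pt} (h : CC l) : CC (l.rotate 1) := by
  obtain ⟨hc, hw⟩ := h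
  match l with
  | [] => exact ⟨List.IsChain.nil, by simp⟩
  | [a] => rw [List.rotate_singleton]; exact ⟨hc, hw⟩
  | a :: b :: s =>
    rw [show (1 : ℕ) = 0 + 1 from rfl, List.rotate_cons_succ, List.rotate_zero]
    constructor
    · refine List.isChain_append.mpr ⟨hc.tail, List.isChain_singleton a, ?_⟩
      intro x hx y hy
      simp only [List.head?_cons, Option.mem_some_iff] at hy
      subst hy
      exact hw x (by simpa using hx) a (by simp)
    · intro x hx y hy
      rw [List.getLast?_concat] at hx
      rw [List.head?_append_of_ne_nil _ (by simp)] at hy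
      simp only [Option.mem_some_iff, List.head?_cons] at hx hy
      subst hx; subst hy
      exact (List.isChain_cons_cons.mp hc).1

lemma CC_rotate {l : List Pt} (h : CC l) (k : ℕ) : CC (l.rotate k) := by
  induction k with
  | zero => simpa using h
  | succ k ih => rw [← List.rotate_rotate]; exact CC_rot1 ih

lemma CC_reverse {l : List Pt} (h : CC l) : CC l.reverse := by
  refine ⟨List.isChain_reverse.mpr (h.1.imp fun a b hab => knightGraph.adj_symm hab), ?_⟩
  intro x hx y hy
  rw [List.getLast?_reverse] at hx
  rw [List.head?_reverse] at hy
  exact knightGraph.adj_symm (h.2 y hy x hx)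

lemma CEd_rotate {l : List Pt} {u v : Pt} (h : CEd l u v) (k : ℕ) : CEd (l.rotate k) u v := by
  obtain ⟨i, hi, hu, hv⟩ := h
  have hn0 : 0 < l.length := by omega
  have hr : k % l.length < l.length := Nat.mod_lt _ hn0
  have hdm : l.length * (k / l.length) + k % l.length = k := Nat.div_add_mod k l.length
  have hmul : l.length * (1 + k / l.length) = l.length + l.length * (k / l.length) := by ring
  refine ⟨(i + (l.length - k % l.length)) % l.length, ?_, ?_, ?_⟩
  · simp only [List.length_rotate]; exact Nat.mod_lt _ hn0
  · rw [List.getElem?_rotate (Nat.mod_lt _ hn0)]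
    rw [Nat.mod_add_mod]
    rw [show i + (l.length - k % l.length) + k = i + l.length * (1 + k / l.length) by omega]
    rw [Nat.add_mul_mod_self_left, Nat.mod_eq_of_lt hi]
    exact hu
  · simp only [List.length_rotate]
    rw [List.getElem?_rotate (Nat.mod_lt _ hn0)]
    rw [Nat.mod_add_mod, Nat.add_assoc, Nat.mod_add_mod]
    rw [show i + (l.length - k % l.length) + (1 + k) = (i + 1) + l.length * (1 + k / l.length) by
      omega]
    rw [Nat.add_mul_mod_self_left]
    exact hv

lemma CEd_reverse {l : List Pt} {u v : Pt} (h : CEd l u v) : CEd l.reverse v u := by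
  obtain ⟨i, hi, hu, hv⟩ := h
  have hn0 : 0 < l.length := by omega
  by_cases hc : i + 1 < l.length
  · rw [Nat.mod_eq_of_lt hc] at hv
    refine ⟨l.length - 2 - i, by rw [List.length_reverse]; omega, ?_, ?_⟩
    · rw [List.getElem?_reverse (by omega)]
      rw [show l.length - 1 - (l.length - 2 - i) = i + 1 by omega]
      exact hv
    · rw [List.length_reverse, show l.length - 2 - i + 1 = l.length - 1 - i by omega,
        Nat.mod_eq_of_lt (by omega)]
      rw [List.getElem?_reverse (by omega)]
      rw [show l.length - 1 - (l.length - 1 - i) = i by omega]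
      exact hu
  · have hi1 : i + 1 = l.length := by omega
    rw [show (i+1) % l.length = 0 by rw [hi1]; exact Nat.mod_self _] at hv
    refine ⟨l.length - 1, by rw [List.length_reverse]; omega, ?_, ?_⟩
    · rw [List.getElem?_reverse (by omega), show l.length - 1 - (l.length - 1) = 0 by omega]
      exact hv
    · rw [List.length_reverse, show l.length - 1 + 1 = l.length by omega, Nat.mod_self]
      rw [List.getElem?_reverse (by omega), show l.length - 1 - 0 = i by omega]
      exact hu

lemma CE_rotate {l : List Pt} {u v : Pt} (h : CE l u v) (k : ℕ) : CE (l.rotate k) u v :=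
  h.imp (fun h' => CEd_rotate h' k) (fun h' => CEd_rotate h' k)

lemma CE_reverse {l : List Pt} {u v : Pt} (h : CE l u v) : CE l.reverse u v :=
  h.elim (fun h' => Or.inr (CEd_reverse h')) (fun h' => Or.inl (CEd_reverse h'))

/-- cut a cyclic tour at a cyclic edge, obtaining a list beginning with `v`, ending with `u`. -/
lemma cutAt {l : List Pt} {u v : Pt} (hcc : CC l) (h : CE l u v) :
    ∃ l', l'.Perm l ∧ CC l' ∧ (∀ a b, CE l a b → CE l' a b) ∧
      l'.head? = some v ∧ l'.getLast? = some u := by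
  have aux : ∀ (l : List Pt), CC l → CEd l u v →
      ∃ l', l'.Perm l ∧ CC l' ∧ (∀ a b, CE l a b → CE l' a b) ∧
        l'.head? = some v ∧ l'.getLast? = some u := by
    intro l hcc h
    obtain ⟨i, hi, hu, hv⟩ := h
    have hn0 : 0 < l.length := by omega
    refine ⟨l.rotate ((i+1) % l.length), List.rotate_perm _ _, CC_rotate hcc _, ?_, ?_, ?_⟩
    · intro a b hab; exact CE_rotate hab _
    · rw [List.head?_eq_getElem?, List.getElem?_rotate (by omega)]
      rw [Nat.zero_add, Nat.mod_mod_of_dvd _ dvd_rfl]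
      exact hv
    · rw [List.getLast?_eq_getElem?, List.length_rotate]
      rw [List.getElem?_rotate (by omega)]
      by_cases hc : i + 1 < l.length
      · rw [Nat.mod_eq_of_lt hc,
          show l.length - 1 + (i+1) = i + l.length * 1 by omega,
          Nat.add_mul_mod_self_left, Nat.mod_eq_of_lt hi]
        exact hu
      · rw [show (i+1) % l.length = 0 by rw [show i + 1 = l.length by omega]; exact Nat.mod_self _,
          Nat.add_zero, Nat.mod_eq_of_lt (by omega), show l.length - 1 = i by omega]
        exact hu
  rcases h with h | h
  · exact aux l hcc h
  · obtain ⟨l', hp, hcc', hpres, hh, hl⟩ := aux l.reverse (CC_reverse hcc) (CEd_reverse h)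
    exact ⟨l', hp.trans l.reverse_perm, hcc',
      fun a b hab => hpres a b (CE_reverse hab), hh, hl⟩

lemma CEd_append_left {l1 l2 : List Pt} {u v : Pt} (h : CEd l1 u v)
    (hne : l1.getLast? ≠ some u) : CEd (l1 ++ l2) u v := by
  obtain ⟨i, hi, hu, hv⟩ := h
  have hc : i + 1 < l1.length := by
    rcases Nat.lt_or_ge (i+1) l1.length with h' | h'
    · exact h'
    · exfalso
      apply hne
      rw [List.getLast?_eq_getElem?, show l1.length - 1 = i by omega]
      exact hu
  rw [Nat.mod_eq_of_lt hc] at hv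
  refine ⟨i, by rw [List.length_append]; omega, ?_, ?_⟩
  · rw [List.getElem?_append_left hi]; exact hu
  · rw [List.length_append, Nat.mod_eq_of_lt (by omega), List.getElem?_append_left hc]; exact hv

lemma CEd_append_right {l1 l2 : List Pt} {u v : Pt} (h : CEd l2 u v)
    (hne : l2.getLast? ≠ some u) : CEd (l1 ++ l2) u v := by
  obtain ⟨i, hi, hu, hv⟩ := h
  have hc : i + 1 < l2.length := by
    rcases Nat.lt_or_ge (i+1) l2.length with h' | h'
    · exact h'
    · exfalso
      apply hne
      rw [List.getLast?_eq_getElem?, show l2.length - 1 = i by omega]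
      exact hu
  rw [Nat.mod_eq_of_lt hc] at hv
  refine ⟨l1.length + i, by rw [List.length_append]; omega, ?_, ?_⟩
  · rw [List.getElem?_append_right (by omega), show l1.length + i - l1.length = i by omega]
    exact hu
  · rw [List.length_append, Nat.mod_eq_of_lt (by omega),
      show l1.length + i + 1 = l1.length + (i+1) by omega,
      List.getElem?_append_right (by omega), show l1.length + (i+1) - l1.length = i + 1 by omega]
    exact hv

lemma CE_append_left {l1 l2 : List Pt} {u v : Pt} (h : CE l1 u v)
    (hneu : l1.getLast? ≠ some u) (hnev : l1.getLast? ≠ some v) : CE (l1 ++ l2) u v :=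
  h.imp (fun h' => CEd_append_left h' hneu) (fun h' => CEd_append_left h' hnev)

lemma CE_append_right {l1 l2 : List Pt} {u v : Pt} (h : CE l2 u v)
    (hneu : l2.getLast? ≠ some u) (hnev : l2.getLast? ≠ some v) : CE (l1 ++ l2) u v :=
  h.imp (fun h' => CEd_append_right h' hneu) (fun h' => CEd_append_right h' hnev)

lemma CEd_map {l : List Pt} {u v : Pt} (f : Pt → Pt) (h : CEd l u v) :
    CEd (l.map f) (f u) (f v) := by
  obtain ⟨i, hi, hu, hv⟩ := h
  refine ⟨i, by rw [List.length_map]; omega, ?_, ?_⟩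
  · rw [List.getElem?_map, hu]; rfl
  · rw [List.length_map, List.getElem?_map, hv]; rfl

lemma CE_map {l : List Pt} {u v : Pt} (f : Pt → Pt) (h : CE l u v) :
    CE (l.map f) (f u) (f v) :=
  h.imp (fun h' => CEd_map f h') (fun h' => CEd_map f h')

lemma CC_append {l1 l2 : List Pt} (h1 : CC l1) (h2 : CC l2)
    (hne1 : l1 ≠ []) (hne2 : l2 ≠ [])
    (h12 : ∀ x ∈ l1.getLast?, ∀ y ∈ l2.head?, knightGraph.Adj x y)
    (h21 : ∀ x ∈ l2.getLast?, ∀ y ∈ l1.head?, knightGraph.Adj x y) :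
    CC (l1 ++ l2) := by
  constructor
  · exact List.isChain_append.mpr ⟨h1.1, h2.1, h12⟩
  · intro x hx y hy
    rw [List.getLast?_append] at hx
    rw [List.head?_append_of_ne_nil _ hne1] at hy
    have hl2 : l2.getLast?.isSome := by
      cases hl : l2.getLast? with
      | none => exact absurd (List.getLast?_eq_none_iff.mp hl) hne2
      | some a => rfl
    rw [Option.or_of_isSome hl2] at hx
    exact h21 x hx y hy

def Tour (m n : ℕ) (l : List Pt) : Prop :=
  l.length = m * n ∧ l.Nodup ∧ (∀ p ∈ l, p ∈ boardSet m n) ∧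
    (∀ p ∈ boardSet m n, p ∈ l) ∧ CC l

def Q (m n : ℕ) : Prop :=
  ∃ l, Tour m n l ∧ CE l (3,0) (1,1) ∧ CE l (0,(n:ℤ)-1) (2,(n:ℤ)-2) ∧
    CE l (0,3) (1,1) ∧ CE l ((m:ℤ)-1,0) ((m:ℤ)-2,2)

def swp (p : Pt) : Pt := (p.2, p.1)

lemma adj_swp {p q : Pt} (h : knightGraph.Adj p q) : knightGraph.Adj (swp p) (swp q) :=
  h.elim (fun h' => Or.inr ⟨h'.2, h'.1⟩) (fun h' => Or.inl ⟨h'.2, h'.1⟩)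

lemma Q_symm {m n : ℕ} (h : Q m n) : Q n m := by
  obtain ⟨l, ⟨hlen, hnd, hin, hcov, hcc⟩, e1, e2, e3, e4⟩ := h
  refine ⟨l.map swp, ⟨?_, ?_, ?_, ?_, ?_⟩, ?_, ?_, ?_, ?_⟩
  · rw [List.length_map, hlen]; ring
  · exact hnd.map (fun a b hab => by
      simp only [swp, Prod.mk.injEq] at hab
      exact Prod.ext hab.2 hab.1)
  · intro p hp
    obtain ⟨q, hq, rfl⟩ := List.mem_map.mp hp
    obtain ⟨a, b, c, d⟩ := hin q hq
    exact ⟨c, d, a, b⟩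
  · intro p hp
    obtain ⟨a, b, c, d⟩ := hp
    have : swp p ∈ l := hcov (swp p) ⟨c, d, a, b⟩
    exact List.mem_map.mpr ⟨swp p, this, rfl⟩
  · constructor
    · exact (List.isChain_map swp).mpr (hcc.1.imp fun a b hab => adj_swp hab)
    · intro x hx y hy
      rw [List.getLast?_map] at hx
      rw [List.head?_map] at hy
      obtain ⟨x', hx', rfl⟩ := Option.map_eq_some_iff.mp (Option.mem_def.mp hx)
      obtain ⟨y', hy', rfl⟩ := Option.map_eq_some_iff.mp (Option.mem_def.mp hy)
      exact adj_swp (hcc.2 x' hx' y' hy')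
  · have := CE_map swp e3
    simpa [swp] using this
  · have := CE_map swp e4
    simpa [swp] using this
  · have := CE_map swp e1
    simpa [swp] using this
  · have := CE_map swp e2
    simpa [swp] using this

def shf (c : ℤ) (p : Pt) : Pt := (p.1, p.2 + c)

lemma adj_shf {c : ℤ} {p q : Pt} (h : knightGraph.Adj p q) :
    knightGraph.Adj (shf c p) (shf c q) := by
  have e : (shf c p).2 - (shf c q).2 = p.2 - q.2 := by simp only [shf]; ring
  have e1 : (shf c p).1 - (shf c q).1 = p.1 - q.1 := rfl
  exact h.imp (fun h' => ⟨by rw [e1]; exact h'.1, by rw [e]; exact h'.2⟩)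
    (fun h' => ⟨by rw [e1]; exact h'.1, by rw [e]; exact h'.2⟩)

lemma shf_inj (c : ℤ) : Function.Injective (shf c) := by
  intro a b h
  simp only [shf, Prod.ext_iff] at h ⊢
  omega

lemma ne_nil_of_head? {l : List Pt} {a : Pt} (h : l.head? = some a) : l ≠ [] := by
  intro hl; subst hl; simp at h

lemma glueV {m n1 n2 : ℕ} (hm : 5 ≤ m) (h1 : 5 ≤ n1) (h2 : 5 ≤ n2)
    (Q1 : Q m n1) (Q2 : Q m n2) : Q m (n1 + n2) := by
  obtain ⟨A, TA, eB_A, eT_A, eL_A, eR_A⟩ := Q1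
  obtain ⟨B, TB, eB_B, eT_B, eL_B, eR_B⟩ := Q2
  obtain ⟨A', pA, ccA, presA, hA, lA⟩ := cutAt TA.2.2.2.2 eT_A.symm
  obtain ⟨B', pB, ccB, presB, hB, lB⟩ := cutAt TB.2.2.2.2 eB_B.symm
  set B'' : List Pt := B'.map (shf (n1 : ℤ)) with hB''
  have hBh : B''.head? = some ((3 : ℤ), (0 : ℤ) + (n1 : ℤ)) := by
    rw [hB'', List.head?_map, hB]; rfl
  have hBl : B''.getLast? = some ((1 : ℤ), (1 : ℤ) + (n1 : ℤ)) := by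
    rw [hB'', List.getLast?_map, lB]; rfl
  have hAne : A' ≠ [] := ne_nil_of_head? hA
  have hBne : B'' ≠ [] := ne_nil_of_head? hBh
  have memA : ∀ p ∈ A', p ∈ boardSet m n1 := fun p hp => TA.2.2.1 p (pA.mem_iff.mp hp)
  have memB : ∀ p ∈ B', p ∈ boardSet m n2 := fun p hp => TB.2.2.1 p (pB.mem_iff.mp hp)
  refine ⟨A' ++ B'', ⟨?_, ?_, ?_, ?_, ?_⟩, ?_, ?_, ?_, ?_⟩
  · rw [List.length_append, hB'', List.length_map, pA.length_eq, pB.length_eq,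
      TA.1, TB.1, ← Nat.mul_add]
  · rw [List.nodup_append]
    refine ⟨pA.nodup_iff.mpr TA.2.1, (pB.nodup_iff.mpr TB.2.1).map (shf_inj _), ?_⟩
    intro p hp p' hp' hpp
    obtain ⟨-, -, -, hlt⟩ := memA p hp
    obtain ⟨q, hq, rfl⟩ := List.mem_map.mp hp'
    subst hpp
    obtain ⟨-, -, hq2, -⟩ := memB q hq
    have : (shf (n1:ℤ) q).2 = q.2 + n1 := rfl
    omega
  · intro p hp
    rcases List.mem_append.mp hp with hp | hp
    · obtain ⟨a, b, c, d⟩ := memA p hp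
      refine ⟨a, b, c, by push_cast; omega⟩
    · obtain ⟨q, hq, rfl⟩ := List.mem_map.mp hp
      obtain ⟨a, b, c, d⟩ := memB q hq
      refine ⟨a, b, by simp only [shf]; omega, by simp only [shf]; push_cast; omega⟩
  · intro p hp
    obtain ⟨a, b, c, d⟩ := hp
    rcases lt_or_ge p.2 (n1 : ℤ) with hlt | hge
    · refine List.mem_append.mpr (Or.inl (pA.mem_iff.mpr (TA.2.2.2.1 p ⟨a, b, c, hlt⟩)))
    · refine List.mem_append.mpr (Or.inr ?_)
      refine List.mem_map.mpr ⟨(p.1, p.2 - n1), ?_, ?_⟩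
      · refine pB.mem_iff.mpr (TB.2.2.2.1 _ ⟨a, b, by omega, by push_cast at d ⊢; omega⟩)
      · have hr : p.2 - (n1:ℤ) + n1 = p.2 := by ring
        simp [shf, hr]
  · refine CC_append ccA ?_ hAne hBne ?_ ?_
    · constructor
      · exact (List.isChain_map _).mpr (ccB.1.imp fun a b hab => adj_shf hab)
      · intro x hx y hy
        rw [hBl] at hx
        rw [hBh] at hy
        rw [Option.mem_some_iff] at hx hy
        subst hx; subst hy
        exact Or.inr ⟨by norm_num, by rw [show ((1:ℤ)+(n1:ℤ)) - ((0:ℤ)+(n1:ℤ)) = 1 by ring]; norm_num⟩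
    · intro x hx y hy
      rw [lA] at hx; rw [hBh] at hy
      rw [Option.mem_some_iff] at hx hy
      subst hx; subst hy
      exact Or.inl ⟨by norm_num, by rw [show ((n1:ℤ)-2) - ((0:ℤ)+(n1:ℤ)) = -2 by ring]; norm_num⟩
    · intro x hx y hy
      rw [hBl] at hx; rw [hA] at hy
      rw [Option.mem_some_iff] at hx hy
      subst hx; subst hy
      exact Or.inl ⟨by norm_num, by rw [show ((1:ℤ)+(n1:ℤ)) - ((n1:ℤ)-1) = 2 by ring]; norm_num⟩
  · refine CE_append_left (presA _ _ eB_A) ?_ ?_ <;> rw [lA] <;>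
      simp only [ne_eq, Option.some_inj, Prod.mk.injEq, not_and] <;> intro h <;> omega
  · have e1 : ((0:ℤ), ((n1+n2 : ℕ) : ℤ) - 1) = shf (n1:ℤ) ((0:ℤ), (n2:ℤ)-1) := by
      simp only [shf, Prod.ext_iff]
      refine ⟨trivial, by push_cast; ring⟩
    have e2 : ((2:ℤ), ((n1+n2 : ℕ) : ℤ) - 2) = shf (n1:ℤ) ((2:ℤ), (n2:ℤ)-2) := by
      simp only [shf, Prod.ext_iff]
      refine ⟨trivial, by push_cast; ring⟩
    rw [e1, e2]
    refine CE_append_right (CE_map _ (presB _ _ eT_B)) ?_ ?_ <;> rw [hBl] <;>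
      simp only [ne_eq, Option.some_inj, Prod.mk.injEq, not_and, shf] <;> intro h <;> omega
  · refine CE_append_left (presA _ _ eL_A) ?_ ?_ <;> rw [lA] <;>
      simp only [ne_eq, Option.some_inj, Prod.mk.injEq, not_and] <;> intro h <;> omega
  · refine CE_append_left (presA _ _ eR_A) ?_ ?_ <;> rw [lA] <;>
      simp only [ne_eq, Option.some_inj, Prod.mk.injEq, not_and] <;> intro h <;> omega

def adjB (p q : Pt) : Bool :=
  ((p.1-q.1).natAbs == 1 && (p.2-q.2).natAbs == 2) ||
  ((p.1-q.1).natAbs == 2 && (p.2-q.2).natAbs == 1)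

lemma adjB_sound {p q : Pt} (h : adjB p q = true) : knightGraph.Adj p q := by
  simp only [adjB, Bool.or_eq_true, Bool.and_eq_true, beq_iff_eq] at h
  rcases h with ⟨h1, h2⟩ | ⟨h1, h2⟩
  · exact Or.inl ⟨by rw [Int.abs_eq_natAbs, h1]; rfl, by rw [Int.abs_eq_natAbs, h2]; rfl⟩
  · exact Or.inr ⟨by rw [Int.abs_eq_natAbs, h1]; rfl, by rw [Int.abs_eq_natAbs, h2]; rfl⟩

def chainB : Pt → List Pt → Bool
  | _, [] => true
  | a, b :: t => adjB a b && chainB b t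

lemma chainB_sound : ∀ (l : List Pt) (a : Pt), chainB a l = true →
    List.Chain knightGraph.Adj a l
  | [], _, _ => List.Chain.nil
  | b :: t, a, h => by
    rw [chainB, Bool.and_eq_true] at h
    exact List.Chain.cons (adjB_sound h.1) (chainB_sound t b h.2)

def wrapB (l : List Pt) : Bool :=
  match l.getLast?, l.head? with
  | some x, some y => adjB x y
  | _, _ => true

def ccB (l : List Pt) : Bool :=
  (match l with | [] => true | a :: t => chainB a t) && wrapB l

lemma ccB_sound {l : List Pt} (h : ccB l = true) : CC l := by
  rw [ccB.eq_def, Bool.and_eq_true] at h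
  constructor
  · match l, h.1 with
    | [], _ => exact List.IsChain.nil
    | a :: t, h1 => exact chainB_sound t a h1
  · intro x hx y hy
    have h2 := h.2
    rw [wrapB] at h2
    rw [Option.mem_def] at hx hy
    rw [hx, hy] at h2
    exact adjB_sound h2

def ndB : List Pt → Bool
  | [] => true
  | a :: t => !(t.contains a) && ndB t

lemma ndB_sound : ∀ (l : List Pt), ndB l = true → l.Nodup
  | [], _ => List.nodup_nil
  | a :: t, h => by
    rw [ndB, Bool.and_eq_true, Bool.not_eq_true'] at h
    refine List.nodup_cons.mpr ⟨fun hm => ?_, ndB_sound t h.2⟩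
    rw [← List.elem_iff (a := a)] at hm
    rw [List.contains] at h
    rw [hm] at h
    simp at h

def covB (m n : ℕ) (l : List Pt) : Bool :=
  (List.range m).all fun a => (List.range n).all fun b => l.contains ((a:ℤ),(b:ℤ))

lemma covB_sound {m n : ℕ} {l : List Pt} (h : covB m n l = true) :
    ∀ p ∈ boardSet m n, p ∈ l := by
  rintro ⟨x, y⟩ ⟨a, b, c, d⟩
  have hx : x = (x.toNat : ℤ) := (Int.toNat_of_nonneg a).symm
  have hy : y = (y.toNat : ℤ) := (Int.toNat_of_nonneg c).symm
  rw [covB, List.all_eq_true] at h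
  have h1 := h x.toNat (List.mem_range.mpr (by omega))
  rw [List.all_eq_true] at h1
  have h2 := h1 y.toNat (List.mem_range.mpr (by omega))
  rw [show ((x,y) : Pt) = ((x.toNat : ℤ), (y.toNat : ℤ)) by rw [← hx, ← hy]]
  exact List.elem_iff.mp h2

def inbB (m n : ℕ) (l : List Pt) : Bool :=
  l.all fun p => 0 ≤ p.1 && p.1 < (m:ℤ) && (0 ≤ p.2 && p.2 < (n:ℤ))

lemma inbB_sound {m n : ℕ} {l : List Pt} (h : inbB m n l = true) :
    ∀ p ∈ l, p ∈ boardSet m n := by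
  intro p hp
  rw [inbB, List.all_eq_true] at h
  have := h p hp
  simp only [Bool.and_eq_true, decide_eq_true_eq] at this
  exact ⟨this.1.1, this.1.2, this.2.1, this.2.2⟩

lemma mkTour (m n : ℕ) (l : List Pt) (h1 : l.length = m * n) (h2 : ndB l = true)
    (h3 : inbB m n l = true) (h4 : covB m n l = true) (h5 : ccB l = true) : Tour m n l :=
  ⟨h1, ndB_sound l h2, inbB_sound h3, covB_sound h4, ccB_sound h5⟩


def L5_6 : List Pt := [(3,0),(1,1),(0,3),(1,5),(3,4),(1,3),(0,5),(2,4),(4,5),(3,3),(4,1),(2,0),(0,1),(2,2),(1,0),(0,2),(1,4),(3,5),(4,3),(3,1),(1,2),(0,0),(2,1),(4,0),(3,2),(4,4),(2,5),(0,4),(2,3),(4,2)]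

lemma QB5_6 : Q 5 6 := by
  refine ⟨L5_6, mkTour 5 6 _ (by decide) (by decide) (by decide) (by decide) (by decide), ?_, ?_, ?_, ?_⟩
  · exact Or.inl ⟨0, by decide, by decide, by decide⟩
  · exact Or.inl ⟨6, by decide, by decide, by decide⟩
  · exact Or.inr ⟨1, by decide, by decide, by decide⟩
  · exact Or.inl ⟨23, by decide, by decide, by decide⟩

def L5_8 : List Pt := [(3,0),(1,1),(0,3),(1,5),(0,7),(2,6),(4,7),(3,5),(2,7),(4,6),(3,4),(4,2),(2,3),(0,4),(1,6),(3,7),(4,5),(3,3),(4,1),(2,0),(0,1),(1,3),(0,5),(1,7),(3,6),(4,4),(2,5),(0,6),(1,4),(0,2),(1,0),(3,1),(1,2),(0,0),(2,1),(4,0),(3,2),(2,4),(4,3),(2,2)]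

lemma QB5_8 : Q 5 8 := by
  refine ⟨L5_8, mkTour 5 8 _ (by decide) (by decide) (by decide) (by decide) (by decide), ?_, ?_, ?_, ?_⟩
  · exact Or.inl ⟨0, by decide, by decide, by decide⟩
  · exact Or.inl ⟨4, by decide, by decide, by decide⟩
  · exact Or.inr ⟨1, by decide, by decide, by decide⟩
  · exact Or.inl ⟨35, by decide, by decide, by decide⟩

def L5_10 : List Pt := [(3,0),(1,1),(0,3),(1,5),(0,7),(1,9),(3,8),(4,6),(3,4),(4,2),(2,3),(0,4),(1,6),(0,8),(2,9),(4,8),(2,7),(3,9),(4,7),(3,5),(4,3),(3,1),(1,0),(0,2),(1,4),(0,6),(1,8),(2,6),(0,5),(1,7),(0,9),(2,8),(4,9),(3,7),(4,5),(2,4),(3,6),(4,4),(2,5),(1,3),(3,2),(4,0),(2,1),(0,0),(1,2),(3,3),(4,1),(2,0),(0,1),(2,2)]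

lemma QB5_10 : Q 5 10 := by
  refine ⟨L5_10, mkTour 5 10 _ (by decide) (by decide) (by decide) (by decide) (by decide), ?_, ?_, ?_, ?_⟩
  · exact Or.inl ⟨0, by decide, by decide, by decide⟩
  · exact Or.inl ⟨30, by decide, by decide, by decide⟩
  · exact Or.inr ⟨1, by decide, by decide, by decide⟩
  · exact Or.inr ⟨40, by decide, by decide, by decide⟩

def L6_6 : List Pt := [(3,0),(1,1),(0,3),(1,5),(3,4),(5,5),(4,3),(5,1),(3,2),(5,3),(4,5),(2,4),(0,5),(1,3),(0,1),(2,0),(4,1),(2,2),(1,0),(0,2),(1,4),(3,5),(5,4),(3,3),(2,5),(0,4),(1,2),(0,0),(2,1),(4,0),(5,2),(4,4),(2,3),(3,1),(5,0),(4,2)]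

lemma QB6_6 : Q 6 6 := by
  refine ⟨L6_6, mkTour 6 6 _ (by decide) (by decide) (by decide) (by decide) (by decide), ?_, ?_, ?_, ?_⟩
  · exact Or.inl ⟨0, by decide, by decide, by decide⟩
  · exact Or.inr ⟨11, by decide, by decide, by decide⟩
  · exact Or.inr ⟨1, by decide, by decide, by decide⟩
  · exact Or.inl ⟨34, by decide, by decide, by decide⟩

def L6_7 : List Pt := [(3,0),(1,1),(0,3),(1,5),(3,6),(5,5),(4,3),(5,1),(3,2),(4,0),(5,2),(4,4),(5,6),(3,5),(1,6),(2,4),(0,5),(2,6),(4,5),(5,3),(4,1),(2,0),(0,1),(2,2),(1,0),(0,2),(1,4),(0,6),(2,5),(1,3),(3,4),(4,6),(5,4),(3,3),(2,1),(0,0),(1,2),(0,4),(2,3),(3,1),(5,0),(4,2)]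

lemma QB6_7 : Q 6 7 := by
  refine ⟨L6_7, mkTour 6 7 _ (by decide) (by decide) (by decide) (by decide) (by decide), ?_, ?_, ?_, ?_⟩
  · exact Or.inl ⟨0, by decide, by decide, by decide⟩
  · exact Or.inl ⟨27, by decide, by decide, by decide⟩
  · exact Or.inr ⟨1, by decide, by decide, by decide⟩
  · exact Or.inl ⟨40, by decide, by decide, by decide⟩

def L6_8 : List Pt := [(3,0),(1,1),(0,3),(1,5),(0,7),(2,6),(4,7),(5,5),(3,6),(5,7),(4,5),(5,3),(4,1),(2,0),(0,1),(2,2),(1,0),(0,2),(1,4),(0,6),(2,7),(4,6),(3,4),(1,3),(0,5),(1,7),(2,5),(3,7),(5,6),(4,4),(3,2),(5,1),(4,3),(2,4),(1,6),(0,4),(1,2),(0,0),(2,1),(4,0),(5,2),(3,3),(5,4),(3,5),(2,3),(3,1),(5,0),(4,2)]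

lemma QB6_8 : Q 6 8 := by
  refine ⟨L6_8, mkTour 6 8 _ (by decide) (by decide) (by decide) (by decide) (by decide), ?_, ?_, ?_, ?_⟩
  · exact Or.inl ⟨0, by decide, by decide, by decide⟩
  · exact Or.inl ⟨4, by decide, by decide, by decide⟩
  · exact Or.inr ⟨1, by decide, by decide, by decide⟩
  · exact Or.inl ⟨46, by decide, by decide, by decide⟩

def L6_9 : List Pt := [(3,0),(1,1),(0,3),(1,5),(0,7),(2,8),(4,7),(5,5),(4,3),(5,1),(3,2),(4,0),(5,2),(4,4),(5,6),(4,8),(3,6),(5,7),(3,8),(1,7),(0,5),(2,4),(1,6),(0,8),(2,7),(0,6),(1,8),(3,7),(5,8),(4,6),(2,5),(0,4),(2,3),(3,5),(5,4),(4,2),(5,0),(3,1),(1,0),(0,2),(1,4),(2,6),(4,5),(5,3),(3,4),(1,3),(2,1),(0,0),(1,2),(3,3),(4,1),(2,0),(0,1),(2,2)]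

lemma QB6_9 : Q 6 9 := by
  refine ⟨L6_9, mkTour 6 9 _ (by decide) (by decide) (by decide) (by decide) (by decide), ?_, ?_, ?_, ?_⟩
  · exact Or.inl ⟨0, by decide, by decide, by decide⟩
  · exact Or.inl ⟨23, by decide, by decide, by decide⟩
  · exact Or.inr ⟨1, by decide, by decide, by decide⟩
  · exact Or.inr ⟨35, by decide, by decide, by decide⟩

def L6_10 : List Pt := [(3,0),(1,1),(0,3),(1,5),(0,7),(1,9),(3,8),(5,9),(4,7),(3,9),(5,8),(4,6),(5,4),(4,2),(5,0),(3,1),(1,0),(0,2),(2,3),(0,4),(1,2),(0,0),(2,1),(4,0),(5,2),(4,4),(5,6),(4,8),(2,7),(0,8),(2,9),(1,7),(0,9),(2,8),(4,9),(5,7),(3,6),(5,5),(3,4),(5,3),(4,1),(2,0),(0,1),(2,2),(4,3),(3,5),(1,6),(2,4),(0,5),(2,6),(4,5),(3,3),(1,4),(0,6),(1,8),(3,7),(2,5),(1,3),(3,2),(5,1)]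

lemma QB6_10 : Q 6 10 := by
  refine ⟨L6_10, mkTour 6 10 _ (by decide) (by decide) (by decide) (by decide) (by decide), ?_, ?_, ?_, ?_⟩
  · exact Or.inl ⟨0, by decide, by decide, by decide⟩
  · exact Or.inl ⟨32, by decide, by decide, by decide⟩
  · exact Or.inr ⟨1, by decide, by decide, by decide⟩
  · exact Or.inr ⟨13, by decide, by decide, by decide⟩

def L7_8 : List Pt := [(3,0),(1,1),(0,3),(1,5),(0,7),(2,6),(4,7),(6,6),(5,4),(6,2),(5,0),(4,2),(6,1),(4,0),(2,1),(0,0),(1,2),(2,0),(0,1),(1,3),(0,5),(1,7),(3,6),(5,7),(6,5),(5,3),(4,1),(6,0),(5,2),(6,4),(4,5),(3,3),(1,4),(0,6),(2,7),(4,6),(6,7),(5,5),(3,4),(2,2),(1,0),(0,2),(2,3),(3,1),(4,3),(3,5),(5,6),(3,7),(2,5),(0,4),(1,6),(2,4),(3,2),(4,4),(6,3),(5,1)]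

lemma QB7_8 : Q 7 8 := by
  refine ⟨L7_8, mkTour 7 8 _ (by decide) (by decide) (by decide) (by decide) (by decide), ?_, ?_, ?_, ?_⟩
  · exact Or.inl ⟨0, by decide, by decide, by decide⟩
  · exact Or.inl ⟨4, by decide, by decide, by decide⟩
  · exact Or.inr ⟨1, by decide, by decide, by decide⟩
  · exact Or.inl ⟨27, by decide, by decide, by decide⟩

def L7_10 : List Pt := [(3,0),(1,1),(0,3),(1,5),(0,7),(1,9),(3,8),(5,9),(6,7),(5,5),(6,3),(5,1),(3,2),(4,0),(6,1),(5,3),(6,5),(5,7),(6,9),(4,8),(2,9),(0,8),(2,7),(0,6),(1,8),(3,9),(5,8),(4,6),(3,4),(2,6),(0,5),(1,3),(0,1),(2,0),(4,1),(6,0),(5,2),(6,4),(5,6),(6,8),(4,9),(3,7),(4,5),(6,6),(4,7),(2,8),(0,9),(1,7),(3,6),(4,4),(2,5),(0,4),(1,6),(2,4),(1,2),(0,0),(2,1),(3,3),(1,4),(0,2),(1,0),(2,2),(4,3),(3,1),(5,0),(6,2),(5,4),(3,5),(2,3),(4,2)]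

lemma QB7_10 : Q 7 10 := by
  refine ⟨L7_10, mkTour 7 10 _ (by decide) (by decide) (by decide) (by decide) (by decide), ?_, ?_, ?_, ?_⟩
  · exact Or.inl ⟨0, by decide, by decide, by decide⟩
  · exact Or.inr ⟨45, by decide, by decide, by decide⟩
  · exact Or.inr ⟨1, by decide, by decide, by decide⟩
  · exact Or.inl ⟨35, by decide, by decide, by decide⟩

def L8_8 : List Pt := [(3,0),(1,1),(0,3),(1,5),(0,7),(2,6),(4,7),(6,6),(7,4),(6,2),(7,0),(5,1),(7,2),(6,0),(4,1),(2,0),(0,1),(2,2),(1,0),(0,2),(1,4),(0,6),(2,7),(4,6),(6,7),(7,5),(6,3),(7,1),(5,0),(3,1),(4,3),(5,5),(7,6),(6,4),(5,2),(7,3),(6,1),(4,0),(2,1),(0,0),(1,2),(0,4),(1,6),(3,5),(2,3),(4,4),(5,6),(7,7),(6,5),(5,7),(3,6),(1,7),(0,5),(2,4),(3,2),(5,3),(3,4),(1,3),(2,5),(3,7),(4,5),(3,3),(5,4),(4,2)]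

lemma QB8_8 : Q 8 8 := by
  refine ⟨L8_8, mkTour 8 8 _ (by decide) (by decide) (by decide) (by decide) (by decide), ?_, ?_, ?_, ?_⟩
  · exact Or.inl ⟨0, by decide, by decide, by decide⟩
  · exact Or.inl ⟨4, by decide, by decide, by decide⟩
  · exact Or.inr ⟨1, by decide, by decide, by decide⟩
  · exact Or.inr ⟨9, by decide, by decide, by decide⟩

def L8_9 : List Pt := [(3,0),(1,1),(0,3),(1,5),(0,7),(2,8),(1,6),(0,8),(2,7),(0,6),(1,8),(3,7),(5,8),(7,7),(6,5),(7,3),(6,1),(4,0),(2,1),(0,0),(1,2),(0,4),(2,5),(1,7),(0,5),(1,3),(0,1),(2,0),(3,2),(2,4),(3,6),(4,8),(6,7),(4,6),(3,8),(5,7),(7,8),(6,6),(7,4),(5,3),(4,5),(2,6),(3,4),(2,2),(1,0),(0,2),(1,4),(3,3),(4,1),(6,0),(7,2),(5,1),(7,0),(6,2),(5,4),(7,5),(6,3),(7,1),(5,0),(3,1),(5,2),(4,4),(5,6),(6,8),(4,7),(5,5),(7,6),(6,4),(4,3),(3,5),(2,3),(4,2)]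

lemma QB8_9 : Q 8 9 := by
  refine ⟨L8_9, mkTour 8 9 _ (by decide) (by decide) (by decide) (by decide) (by decide), ?_, ?_, ?_, ?_⟩
  · exact Or.inl ⟨0, by decide, by decide, by decide⟩
  · exact Or.inl ⟨7, by decide, by decide, by decide⟩
  · exact Or.inr ⟨1, by decide, by decide, by decide⟩
  · exact Or.inl ⟨52, by decide, by decide, by decide⟩

def L8_10 : List Pt := [(3,0),(1,1),(0,3),(1,5),(0,7),(1,9),(3,8),(5,9),(7,8),(6,6),(7,4),(6,2),(7,0),(5,1),(7,2),(6,0),(4,1),(2,0),(0,1),(2,2),(1,0),(0,2),(1,4),(0,6),(1,8),(3,9),(5,8),(7,9),(6,7),(7,5),(6,3),(7,1),(5,0),(3,1),(4,3),(6,4),(7,6),(6,8),(4,9),(2,8),(0,9),(1,7),(2,9),(0,8),(2,7),(4,8),(6,9),(7,7),(5,6),(3,7),(1,6),(0,4),(1,2),(0,0),(2,1),(4,0),(5,2),(7,3),(6,1),(5,3),(3,2),(1,3),(0,5),(2,4),(3,6),(5,7),(6,5),(4,4),(2,5),(3,3),(4,5),(2,6),(4,7),(5,5),(3,4),(4,6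),(5,4),(3,5),(2,3),(4,2)]

lemma QB8_10 : Q 8 10 := by
  refine ⟨L8_10, mkTour 8 10 _ (by decide) (by decide) (by decide) (by decide) (by decide), ?_, ?_, ?_, ?_⟩
  · exact Or.inl ⟨0, by decide, by decide, by decide⟩
  · exact Or.inr ⟨39, by decide, by decide, by decide⟩
  · exact Or.inr ⟨1, by decide, by decide, by decide⟩
  · exact Or.inr ⟨11, by decide, by decide, by decide⟩

def L9_10 : List Pt := [(3,0),(1,1),(0,3),(1,5),(0,7),(1,9),(3,8),(5,9),(7,8),(8,6),(7,4),(8,2),(7,0),(5,1),(7,2),(8,0),(6,1),(4,0),(3,2),(2,0),(0,1),(1,3),(0,5),(1,7),(0,9),(2,8),(4,9),(6,8),(8,9),(7,7),(6,9),(8,8),(7,6),(8,4),(6,5),(5,7),(3,6),(2,4),(1,6),(0,8),(2,9),(4,8),(6,7),(7,9),(8,7),(7,5),(8,3),(7,1),(6,3),(5,5),(4,7),(3,9),(2,7),(0,6),(1,8),(2,6),(1,4),(0,2),(1,0),(2,2),(3,4),(5,3),(4,1),(6,0),(8,1),(6,2),(5,0),(3,1),(4,3),(3,5),(5,6),(6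,4),(8,5),(7,3),(5,2),(4,4),(2,3),(0,4),(1,2),(0,0),(2,1),(3,3),(4,5),(3,7),(2,5),(4,6),(5,8),(6,6),(5,4),(4,2)]

lemma QB9_10 : Q 9 10 := by
  refine ⟨L9_10, mkTour 9 10 _ (by decide) (by decide) (by decide) (by decide) (by decide), ?_, ?_, ?_, ?_⟩
  · exact Or.inl ⟨0, by decide, by decide, by decide⟩
  · exact Or.inl ⟨24, by decide, by decide, by decide⟩
  · exact Or.inr ⟨1, by decide, by decide, by decide⟩
  · exact Or.inr ⟨14, by decide, by decide, by decide⟩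

def L10_10 : List Pt := [(3,0),(1,1),(0,3),(1,5),(0,7),(1,9),(3,8),(5,9),(7,8),(9,9),(8,7),(7,9),(9,8),(8,6),(9,4),(8,2),(9,0),(7,1),(9,2),(8,0),(6,1),(4,0),(2,1),(0,0),(1,2),(2,0),(0,1),(1,3),(0,5),(1,7),(0,9),(2,8),(4,9),(6,8),(8,9),(9,7),(8,5),(9,3),(8,1),(6,0),(4,1),(2,2),(1,0),(0,2),(1,4),(0,6),(1,8),(3,9),(4,7),(2,6),(3,4),(4,2),(5,0),(3,1),(2,3),(0,4),(1,6),(0,8),(2,9),(3,7),(2,5),(3,3),(5,2),(7,3),(5,4),(3,5),(2,7),(4,6),(5,8),(6,6),(4,5),(2,4),(3,2),(5,3),(7,4),(9,5),(8,3),(6,2),(7,0),(9,1),(7,2),(6,4),(4,3),(5,5),(6,7),(4,8),(3,6),(4,4),(5,6),(7,5),(9,6),(8,8),(6,9),(7,7),(6,5),(5,7),(7,6),(8,4),(6,3),(5,1)]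

lemma QB10_10 : Q 10 10 := by
  refine ⟨L10_10, mkTour 10 10 _ (by decide) (by decide) (by decide) (by decide) (by decide), ?_, ?_, ?_, ?_⟩
  · exact Or.inl ⟨0, by decide, by decide, by decide⟩
  · exact Or.inl ⟨30, by decide, by decide, by decide⟩
  · exact Or.inr ⟨1, by decide, by decide, by decide⟩
  · exact Or.inr ⟨15, by decide, by decide, by decide⟩

lemma Qbase {m n : ℕ} (hm5 : 5 ≤ m) (hm10 : m ≤ 10) (hn5 : 5 ≤ n) (hn10 : n ≤ 10)
    (he : Even (m * n)) : Q m n := by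
  interval_cases m <;> interval_cases n <;>
    first
      | exact QB5_6 | exact QB5_8 | exact QB5_10 | exact QB6_6 | exact QB6_7
      | exact QB6_8 | exact QB6_9 | exact QB6_10 | exact QB7_8 | exact QB7_10
      | exact QB8_8 | exact QB8_9 | exact QB8_10 | exact QB9_10 | exact QB10_10
      | exact Q_symm QB5_6 | exact Q_symm QB5_8 | exact Q_symm QB5_10
      | exact Q_symm QB6_7 | exact Q_symm QB6_8 | exact Q_symm QB6_9 | exact Q_symm QB6_10
      | exact Q_symm QB7_8 | exact Q_symm QB7_10 | exact Q_symm QB8_9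
      | exact Q_symm QB8_10 | exact Q_symm QB9_10
      | exact absurd he (by decide)

lemma even_sub_even {m k : ℕ} (h : Even m) (hk : Even k) (hle : k ≤ m) : Even (m - k) := by
  obtain ⟨a, ha⟩ := h
  obtain ⟨b, hb⟩ := hk
  exact ⟨a - b, by omega⟩

lemma Qall : ∀ (k m n : ℕ), m + n ≤ k → 5 ≤ m → 5 ≤ n → Even (m * n) → Q m n := by
  intro k
  induction k with
  | zero => intro m n h hm hn _; omega
  | succ k ih =>
    intro m n hk hm hn he
    by_cases hn10 : n ≤ 10
    · by_cases hm10 : m ≤ 10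
      · exact Qbase hm hm10 hn hn10 he
      · push_neg at hm10
        rcases Nat.even_or_odd n with hne | hno
        · have q1 : Q n 5 := ih n 5 (by omega) hn (by omega) (Nat.even_mul.mpr (Or.inl hne))
          have q2 : Q n (m - 5) := ih n (m - 5) (by omega) hn (by omega)
            (Nat.even_mul.mpr (Or.inl hne))
          have hg := glueV hn (by omega) (by omega) q1 q2
          rw [show 5 + (m - 5) = m by omega] at hg
          exact Q_symm hg
        · have hme : Even m := by
            rcases Nat.even_mul.mp he with h | h
            · exact h
            · exact absurd h (Nat.not_even_iff_odd.mpr hno)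
          have q1 : Q n 6 := ih n 6 (by omega) hn (by omega)
            (Nat.even_mul.mpr (Or.inr (by decide)))
          have q2 : Q n (m - 6) := ih n (m - 6) (by omega) hn (by omega)
            (Nat.even_mul.mpr (Or.inr (even_sub_even hme (by decide) (by omega))))
          have hg := glueV hn (by omega) (by omega) q1 q2
          rw [show 6 + (m - 6) = m by omega] at hg
          exact Q_symm hg
    · push_neg at hn10
      rcases Nat.even_or_odd m with hme | hmo
      · have q1 : Q m 5 := ih m 5 (by omega) hm (by omega) (Nat.even_mul.mpr (Or.inl hme))
        have q2 : Q m (n - 5) := ih m (n - 5) (by omega) hm (by omega)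
          (Nat.even_mul.mpr (Or.inl hme))
        have hg := glueV hm (by omega) (by omega) q1 q2
        rw [show 5 + (n - 5) = n by omega] at hg
        exact hg
      · have hne : Even n := by
          rcases Nat.even_mul.mp he with h | h
          · exact absurd h (Nat.not_even_iff_odd.mpr hmo)
          · exact h
        have q1 : Q m 6 := ih m 6 (by omega) hm (by omega)
          (Nat.even_mul.mpr (Or.inr (by decide)))
        have q2 : Q m (n - 6) := ih m (n - 6) (by omega) hm (by omega)
          (Nat.even_mul.mpr (Or.inr (even_sub_even hne (by decide) (by omega))))
        have hg := glueV hm (by omega) (by omega) q1 q2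
        rw [show 6 + (n - 6) = n by omega] at hg
        exact hg

/-- A lift of a nullhomotopic closed knight's tour of the `m × n` Möbius strip board:
a closed walk in the knight's graph on the width-`m` strip from `(0,0)` to `(0,0)` of
length `mn` whose projection visits every board square exactly once. -/
def IsNullhomotopicMobiusTourLift (m n : ℕ)
    (w : knightGraph.Walk ((0 : ℤ), (0 : ℤ)) ((0 : ℤ), (0 : ℤ))) : Prop :=
  (∀ p ∈ w.support, 0 ≤ p.1 ∧ p.1 < (m : ℤ)) ∧ w.length = m * n ∧
    ∀ q ∈ boardSet m n, ∃! i : Fin (m * n), phi m n (w.getVert i) = q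

lemma phi_id {m n : ℕ} {p : Pt} (hp : p ∈ boardSet m n) : phi m n p = p := by
  obtain ⟨a, b, c, d⟩ := hp
  unfold phi
  rw [Int.ediv_eq_zero_of_lt c d, if_pos Even.zero, Int.emod_eq_of_lt a b,
    Int.emod_eq_of_lt c d]

lemma walk_of_chain : ∀ (t : List Pt) (a b : Pt),
    List.Chain' knightGraph.Adj (a :: (t ++ [b])) →
    ∃ w : knightGraph.Walk a b, w.support = a :: (t ++ [b]) := by
  intro t
  induction t with
  | nil =>
    intro a b h
    have hab : knightGraph.Adj a b := List.isChain_pair.mp h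
    exact ⟨SimpleGraph.Walk.cons hab SimpleGraph.Walk.nil, by simp⟩
  | cons c t ih =>
    intro a b h
    rw [List.cons_append] at h; replace h := List.isChain_cons_cons.mp h
    obtain ⟨w, hw⟩ := ih c b h.2
    exact ⟨SimpleGraph.Walk.cons h.1 w, by simp [hw]⟩

lemma getVert_support {u v : Pt} (w : knightGraph.Walk u v) :
    ∀ i : ℕ, i ≤ w.length → w.support[i]? = some (w.getVert i) := by
  induction w with
  | nil =>
    intro i hi
    have : i = 0 := by simpa using hi
    subst this
    simp
  | @cons a b c h p ih =>
    intro i hi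
    match i with
    | 0 => simp
    | (j+1) =>
      rw [SimpleGraph.Walk.support_cons, List.getElem?_cons_succ,
        SimpleGraph.Walk.getVert_cons_succ]
      exact ih j (by rw [SimpleGraph.Walk.length_cons] at hi; omega)

/-- parity of a knight walk -/
lemma walk_parity {u v : Pt} (w : knightGraph.Walk u v) :
    (u.1 + u.2 + (w.length : ℤ)) % 2 = (v.1 + v.2) % 2 := by
  induction w with
  | nil => simp
  | @cons a b c h p ih =>
    have hab : (a.1 + a.2 + 1) % 2 = (b.1 + b.2) % 2 := by
      rcases h with ⟨h1, h2⟩ | ⟨h1, h2⟩ <;>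
        rw [abs_eq (by norm_num : (0:ℤ) ≤ _)] at h1 h2 <;> omega
    rw [SimpleGraph.Walk.length_cons]
    push_cast
    omega

/-- If `m, n ≥ 5` with at least one `> 5` and at least one even, the `m × n` Möbius strip
board admits a nullhomotopic closed knight's tour; if `m` and `n` are both odd with
`mn > 1`, it admits none. -/
theorem mobius_nullhomotopic_tours (m n : ℕ) :
    (5 ≤ m → 5 ≤ n → (5 < m ∨ 5 < n) → (Even m ∨ Even n) →
      ∃ w : knightGraph.Walk ((0 : ℤ), (0 : ℤ)) ((0 : ℤ), (0 : ℤ)),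
        IsNullhomotopicMobiusTourLift m n w) ∧
    (Odd m → Odd n → 1 < m * n →
      ¬ ∃ w : knightGraph.Walk ((0 : ℤ), (0 : ℤ)) ((0 : ℤ), (0 : ℤ)),
        IsNullhomotopicMobiusTourLift m n w) := by
  constructor
  · intro hm hn _ hev
    -- get a tour
    have hQ : Q m n := Qall (m + n) m n le_rfl hm hn
      (hev.elim (fun h => Nat.even_mul.mpr (Or.inl h)) (fun h => Nat.even_mul.mpr (Or.inr h)))
    obtain ⟨l0, T0, -, -, -, -⟩ := hQ
    -- rotate so that it starts at (0,0)
    have hb0 : ((0:ℤ), (0:ℤ)) ∈ boardSet m n :=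
      ⟨le_rfl, Int.natCast_pos.mpr (by omega), le_rfl, Int.natCast_pos.mpr (by omega)⟩
    have h00 : ((0:ℤ), (0:ℤ)) ∈ l0 := T0.2.2.2.1 _ hb0
    obtain ⟨j, hj⟩ := List.mem_iff_get.mp h00
    set l : List Pt := l0.rotate j.val with hldef
    have hlen0 : 0 < l0.length := lt_of_le_of_lt (Nat.zero_le _) j.isLt
    have T : Tour m n l := by
      refine ⟨by rw [List.length_rotate]; exact T0.1, (List.rotate_perm l0 j.val).nodup_iff.mpr T0.2.1,
        fun p hp => T0.2.2.1 p ((List.rotate_perm l0 j.val).mem_iff.mp hp),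
        fun p hp => (List.rotate_perm l0 j.val).mem_iff.mpr (T0.2.2.2.1 p hp), CC_rotate T0.2.2.2.2 _⟩
    have hhead : l.head? = some ((0:ℤ), (0:ℤ)) := by
      rw [hldef, List.head?_eq_getElem?, List.getElem?_rotate hlen0, Nat.zero_add,
        Nat.mod_eq_of_lt j.isLt, List.getElem?_eq_getElem j.isLt, ← List.get_eq_getElem, hj]
    -- l is nonempty, l = (0,0) :: t
    obtain ⟨t, hlt⟩ : ∃ t, l = ((0:ℤ),(0:ℤ)) :: t := by
      cases hl : l with
      | nil => rw [hl] at hhead; simp at hhead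
      | cons a t =>
        rw [hl] at hhead
        simp only [List.head?_cons, Option.some_inj] at hhead
        exact ⟨t, by rw [hhead]⟩
    have hchain : List.Chain' knightGraph.Adj (((0:ℤ),(0:ℤ)) :: (t ++ [((0:ℤ),(0:ℤ))])) := by
      have : l ++ [((0:ℤ),(0:ℤ))] = ((0:ℤ),(0:ℤ)) :: (t ++ [((0:ℤ),(0:ℤ))]) := by
        rw [hlt]; rfl
      rw [← this]
      refine List.isChain_append.mpr ⟨T.2.2.2.2.1, List.isChain_singleton _, ?_⟩
      intro x hx y hy
      simp only [List.head?_cons, Option.mem_some_iff] at hy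
      subst hy
      exact T.2.2.2.2.2 x hx _ (by rw [hlt]; simp)
    obtain ⟨w, hw⟩ := walk_of_chain t _ _ hchain
    have hwsupp : w.support = l ++ [((0:ℤ),(0:ℤ))] := by rw [hw, hlt]; rfl
    have hlenl : l.length = m * n := T.1
    have hwl : w.length = m * n := by
      have := w.length_support
      rw [hwsupp, List.length_append] at this
      simp only [List.length_singleton] at this
      omega
    have hgv : ∀ i : ℕ, (hi : i < m * n) → w.getVert i = l.get ⟨i, by omega⟩ := by
      intro i hi
      have h1 := getVert_support w i (by omega)
      rw [hwsupp, List.getElem?_append_left (by omega), List.getElem?_eq_getElem (by omega : i < l.length)] at h1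
      exact (Option.some_inj.mp h1).symm
    refine ⟨w, ?_, hwl, ?_⟩
    · intro p hp
      rw [hwsupp] at hp
      rcases List.mem_append.mp hp with hp | hp
      · obtain ⟨a, b, -, -⟩ := T.2.2.1 p hp
        exact ⟨a, b⟩
      · simp only [List.mem_singleton] at hp
        subst hp
        exact ⟨le_rfl, Int.natCast_pos.mpr (by omega)⟩
    · intro q hq
      have hql : q ∈ l := T.2.2.2.1 q hq
      obtain ⟨i, hi⟩ := List.mem_iff_get.mp hql
      refine ⟨⟨i.val, by omega⟩, ?_, ?_⟩
      · show phi m n (w.getVert i.val) = q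
        rw [hgv i.val (by omega)]
        have : l.get ⟨i.val, by omega⟩ = q := by
          rw [← hi]
        rw [this, phi_id hq]
      · rintro ⟨j', hj'⟩ hphi
        have hphi' : phi m n (w.getVert j') = q := hphi
        rw [hgv j' hj'] at hphi'
        rename' hphi' => hphi
        have hmem : l.get ⟨j', by omega⟩ ∈ l := l.get_mem _
        rw [phi_id (T.2.2.1 _ hmem)] at hphi
        have : l.get ⟨j', by omega⟩ = l.get i := by rw [hphi, hi]
        have := (T.2.1.get_inj_iff).mp this
        have : j' = i.val := by
          have h2 := congrArg Fin.val this
          exact h2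
        exact Fin.ext this
  · intro hm hn _ hex
    obtain ⟨w, -, hlen, -⟩ := hex
    have hp := walk_parity w
    rw [hlen] at hp
    simp only [Prod.fst, Prod.snd] at hp
    obtain ⟨a, ha⟩ := hm
    obtain ⟨b, hb⟩ := hn
    have hmn : m * n = 2 * (2 * a * b + a + b) + 1 := by subst ha hb; ring
    rw [hmn] at hp
    push_cast at hp
    omega
end

section
/- For every m ≥ 1 and n ≥ 1, the Klein bottle knight's graph K(m,n) admits a closed knight's tour (Hamiltonian cycle) whenever mn ≥ 2, and for m=n=1 it admits a closed tour trivially (a loop edge). -/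
namespace KleinTour

lemma knight_adj {p q : ℤ × ℤ} (a b : ℤ)
    (hab : (|a| = 1 ∧ |b| = 2) ∨ (|a| = 2 ∧ |b| = 1))
    (h1 : q.1 = p.1 + a) (h2 : q.2 = p.2 + b) : knightGraph.Adj p q := by
  have e1 : p.1 - q.1 = -a := by omega
  have e2 : p.2 - q.2 = -b := by omega
  change (|p.1 - q.1| = 1 ∧ |p.2 - q.2| = 2) ∨ (|p.1 - q.1| = 2 ∧ |p.2 - q.2| = 1)
  rcases hab with ⟨ha, hb⟩ | ⟨ha, hb⟩
  · exact Or.inl ⟨by rw [e1, abs_neg, ha], by rw [e2, abs_neg, hb]⟩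
  · exact Or.inr ⟨by rw [e1, abs_neg, ha], by rw [e2, abs_neg, hb]⟩

lemma exists_walk : ∀ (N : ℕ) (f : ℕ → ℤ × ℤ),
    (∀ i, i < N → knightGraph.Adj (f i) (f (i + 1))) →
    ∃ w : knightGraph.Walk (f 0) (f N), w.length = N ∧ ∀ i, i ≤ N → w.getVert i = f i := by
  intro N
  induction N with
  | zero =>
    intro f _
    exact ⟨.nil, rfl, by intro i hi; interval_cases i; simp⟩
  | succ N ih =>
    intro f h
    obtain ⟨w', hl, hv⟩ := ih (fun i => f (i + 1)) (fun i hi => h (i + 1) (by omega))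
    refine ⟨.cons (h 0 (by omega)) w', by simp [hl], ?_⟩
    intro i hi
    cases i with
    | zero => simp
    | succ i => rw [SimpleGraph.Walk.getVert_cons_succ]; exact hv i (by omega)

lemma phi_mem (m n : ℕ) (hm : 0 < m) (hn : 0 < n) (p : ℤ × ℤ) : phi m n p ∈ boardSet m n := by
  have hm' : (0:ℤ) < (m:ℤ) := by exact_mod_cast hm
  have hn' : (0:ℤ) < (n:ℤ) := by exact_mod_cast hn
  exact ⟨Int.emod_nonneg _ (by omega), Int.emod_lt_of_pos _ hm',
    Int.emod_nonneg _ (by omega), Int.emod_lt_of_pos _ hn'⟩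

lemma exists_unique_of_surj (m n N : ℕ) (hm : 0 < m) (hn : 0 < n) (hN : N = m * n)
    (F : ℕ → ℤ × ℤ) (hmem : ∀ i, i < N → F i ∈ boardSet m n)
    (hsurj : ∀ q ∈ boardSet m n, ∃ i, i < N ∧ F i = q) :
    ∀ q ∈ boardSet m n, ∃! i : Fin N, F i.1 = q := by
  classical
  set B : Finset (ℤ × ℤ) := Finset.Ico (0:ℤ) (m:ℤ) ×ˢ Finset.Ico (0:ℤ) (n:ℤ) with hB
  have hmemB : ∀ p : ℤ × ℤ, p ∈ B ↔ p ∈ boardSet m n := by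
    intro p
    constructor
    · intro hp
      rw [hB, Finset.mem_product] at hp
      obtain ⟨h1, h2⟩ := hp
      rw [Finset.mem_Ico] at h1 h2
      exact ⟨h1.1, h1.2, h2.1, h2.2⟩
    · intro hp
      obtain ⟨h1, h2, h3, h4⟩ := hp
      rw [hB, Finset.mem_product, Finset.mem_Ico, Finset.mem_Ico]
      exact ⟨⟨h1, h2⟩, h3, h4⟩
  have hcardB : B.card = N := by
    rw [hB, Finset.card_product, hN]
    rw [Int.card_Ico, Int.card_Ico]
    simp
  have hsub : Finset.image F (Finset.range N) = B := by
    apply Finset.Subset.antisymm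
    · intro p hp
      rw [Finset.mem_image] at hp
      obtain ⟨i, hi, rfl⟩ := hp
      rw [Finset.mem_range] at hi
      exact (hmemB _).2 (hmem i hi)
    · intro p hp
      obtain ⟨i, hi, hF⟩ := hsurj p ((hmemB p).1 hp)
      rw [Finset.mem_image]
      exact ⟨i, Finset.mem_range.2 hi, hF⟩
  have hinj : Set.InjOn F (Finset.range N) := by
    rw [← Finset.card_image_iff, hsub, hcardB, Finset.card_range]
  intro q hq
  obtain ⟨i, hi, hF⟩ := hsurj q hq
  refine ⟨⟨i, hi⟩, hF, ?_⟩
  intro j hj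
  apply Fin.ext
  exact hinj (by simpa using j.2) (by simpa using hi) (by rw [hj, hF])

/-- Package: given a position function with the three properties, conclude the goal. -/
lemma pack (m n : ℕ) (hm : 0 < m) (hn : 0 < n) (f : ℕ → ℤ × ℤ)
    (hadj : ∀ i, i < m * n → knightGraph.Adj (f i) (f (i + 1)))
    (hclose : phi m n (f 0) = phi m n (f (m * n)))
    (hsurj : ∀ q ∈ boardSet m n, ∃ i, i < m * n ∧ phi m n (f i) = q) :
    ∃ (s e : ℤ × ℤ) (w : knightGraph.Walk s e),
      phi m n s = phi m n e ∧ w.length = m * n ∧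
      ∀ q ∈ boardSet m n, ∃! i : Fin (m * n), phi m n (w.getVert i) = q := by
  obtain ⟨w, hl, hv⟩ := exists_walk (m * n) f hadj
  refine ⟨f 0, f (m * n), w, hclose, hl, ?_⟩
  have h := exists_unique_of_surj m n (m * n) hm hn rfl (fun i => phi m n (f i))
    (fun i hi => phi_mem m n hm hn (f i)) hsurj
  intro q hq
  obtain ⟨i, hFi, huniq⟩ := h q hq
  refine ⟨i, ?_, ?_⟩
  · show phi m n (w.getVert i.1) = q
    rw [hv i.1 (le_of_lt i.2)]; exact hFi
  · intro j hj
    have hj' : phi m n (w.getVert j.1) = q := hj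
    exact huniq j (by rwa [hv j.1 (le_of_lt j.2)] at hj')

lemma phi_eval (m n : ℕ) (hn : 0 < n) (k x y : ℤ) (h1 : (n:ℤ)*k ≤ y) (h2 : y < (n:ℤ)*(k+1)) :
    phi m n (x, y) = ((if Even k then x else -x) % (m:ℤ), y - n*k) := by
  have hn' : (0:ℤ) < (n:ℤ) := by exact_mod_cast hn
  have hr : (n:ℤ)*(k+1) = n*k + n := by ring
  have hy0 : 0 ≤ y - (n:ℤ)*k := by omega
  have hy1 : y - (n:ℤ)*k < (n:ℤ) := by omega
  have hd : y / (n:ℤ) = k := by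
    rw [show y = (y - (n:ℤ)*k) + k*(n:ℤ) by ring,
      Int.add_mul_ediv_right _ _ (by omega : (n:ℤ) ≠ 0),
      Int.ediv_eq_zero_of_lt hy0 hy1]
    omega
  have he : y % (n:ℤ) = y - n*k := by
    conv_lhs => rw [show y = (y - (n:ℤ)*k) + k*(n:ℤ) by ring]
    rw [Int.add_mul_emod_self_right, Int.emod_eq_of_lt hy0 hy1]
  simp only [phi]
  rw [hd, he]

lemma emod_add_cancel {m x o u : ℤ} (hu : 0 ≤ u) (hum : u < m) (hx : x % m = (u - o) % m) :
    (x + o) % m = u := by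
  have h1 : (x + o) % m = ((u - o) + o) % m := by
    have : x % m % m = (u - o) % m % m := by rw [hx]
    calc (x + o) % m = (x % m + o % m) % m := by rw [Int.add_emod]
    _ = ((u - o) % m + o % m) % m := by rw [hx]
    _ = ((u - o) + o) % m := by rw [← Int.add_emod]
  rw [h1, show u - o + o = u by ring, Int.emod_eq_of_lt hu hum]

lemma key1 (m : ℕ) (o u : ℤ) (hu : 0 ≤ u) (hum : u < (m:ℤ)) :
    ∃ t : ℕ, t < m ∧ ((t : ℤ) + o) % (m:ℤ) = u := by
  have hm' : (0:ℤ) < (m:ℤ) := lt_of_le_of_lt hu hum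
  have h1 : 0 ≤ (u - o) % m := Int.emod_nonneg _ (by omega)
  have h2 : (u - o) % m < m := Int.emod_lt_of_pos _ hm'
  refine ⟨((u - o) % m).toNat, by omega, ?_⟩
  rw [Int.toNat_of_nonneg h1]
  exact emod_add_cancel hu hum (Int.emod_emod_of_dvd _ dvd_rfl)

lemma keyd (m : ℕ) (d e o u : ℤ) (hde : d * e % (m:ℤ) = 1 % (m:ℤ))
    (hu : 0 ≤ u) (hum : u < (m:ℤ)) :
    ∃ t : ℕ, t < m ∧ (d * (t : ℤ) + o) % (m:ℤ) = u := by
  have hm' : (0:ℤ) < (m:ℤ) := lt_of_le_of_lt hu hum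
  have h1 : 0 ≤ ((u - o) * e) % m := Int.emod_nonneg _ (by omega)
  have h2 : ((u - o) * e) % m < m := Int.emod_lt_of_pos _ hm'
  refine ⟨(((u - o) * e) % m).toNat, by omega, ?_⟩
  rw [Int.toNat_of_nonneg h1]
  apply emod_add_cancel hu hum
  have s1 : ((u - o) * e) % m ≡ (u - o) * e [ZMOD (m:ℤ)] := Int.emod_emod_of_dvd _ dvd_rfl
  have s2 : d * (((u - o) * e) % m) ≡ d * ((u - o) * e) [ZMOD (m:ℤ)] := s1.mul_left d
  have s3 : d * ((u - o) * e) = (d * e) * (u - o) := by ring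
  have s4 : (d * e) * (u - o) ≡ 1 * (u - o) [ZMOD (m:ℤ)] :=
    (Int.ModEq.mul_right (u - o) (hde : d * e ≡ 1 [ZMOD (m:ℤ)]))
  have : d * (((u - o) * e) % m) ≡ u - o [ZMOD (m:ℤ)] := by
    calc d * (((u - o) * e) % m) ≡ d * ((u - o) * e) [ZMOD (m:ℤ)] := s2
    _ = (d * e) * (u - o) := s3
    _ ≡ 1 * (u - o) [ZMOD (m:ℤ)] := s4
    _ = u - o := by ring
  exact this

lemma key2 (M : ℕ) (hM : 0 < M) (o u : ℤ) (hu : 0 ≤ u) (hum : u < 2*(M:ℤ)) (hpar : (2:ℤ) ∣ (u - o)) :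
    ∃ t : ℕ, t < M ∧ (2 * (t:ℤ) + o) % (2*(M:ℤ)) = u := by
  have hM' : (0:ℤ) < (M:ℤ) := by exact_mod_cast hM
  have h1 : 0 ≤ ((u - o)/2) % M := Int.emod_nonneg _ (by omega)
  have h2 : ((u - o)/2) % M < M := Int.emod_lt_of_pos _ hM'
  refine ⟨(((u - o)/2) % M).toNat, by omega, ?_⟩
  rw [Int.toNat_of_nonneg h1]
  apply emod_add_cancel hu hum
  have e1 : (2:ℤ) * (((u - o)/2) % M) = (2 * ((u - o)/2)) % (2*(M:ℤ)) :=
    (Int.mul_emod_mul_of_pos _ _ (by norm_num : (0:ℤ) < 2)).symm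
  rw [e1, Int.mul_ediv_cancel' hpar]
  exact Int.emod_emod_of_dvd _ dvd_rfl

lemma key2' (M : ℕ) (hM : 0 < M) (o u : ℤ) (hu : 0 ≤ u) (hum : u < 2*(M:ℤ)) (hpar : (2:ℤ) ∣ (o - u)) :
    ∃ t : ℕ, t < M ∧ (o - 2 * (t:ℤ)) % (2*(M:ℤ)) = u := by
  obtain ⟨t', ht', he⟩ := key2 M hM (o - 2*(M:ℤ) + 2) u hu hum (by omega)
  refine ⟨M - 1 - t', by omega, ?_⟩
  have hcast : ((M - 1 - t' : ℕ) : ℤ) = (M:ℤ) - 1 - (t':ℤ) := by omega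
  rw [hcast, show o - 2*((M:ℤ) - 1 - (t':ℤ)) = 2*(t':ℤ) + (o - 2*(M:ℤ) + 2) by ring]
  exact he


lemma evenZ0 : Even (0:ℤ) := Even.zero
lemma nevenZ1 : ¬ Even (1:ℤ) := by rw [Int.even_iff]; norm_num
lemma nevenZm1 : ¬ Even (-1:ℤ) := by rw [Int.even_iff]; norm_num
lemma evenZm2 : Even (-2:ℤ) := ⟨-1, by ring⟩
lemma mul_emod_zero (a b : ℤ) : (a * b) % a = 0 := Int.mul_emod_right a b
lemma dm_eq (n t c j : ℕ) (hn : 0 < n) (hc : c < n) (hj : j = n*t + c) : j / n = t ∧ j % n = c := by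
  subst hj
  constructor
  · rw [Nat.mul_add_div hn, Nat.div_eq_of_lt hc, Nat.add_zero]
  · rw [Nat.mul_add_mod, Nat.mod_eq_of_lt hc]

lemma idx_lt (n t c m : ℕ) (ht : t < m) (hc : c < n) : n*t + c < m*n := by
  calc n*t + c < n*t + n := by omega
  _ = n*(t+1) := by ring
  _ ≤ n*m := Nat.mul_le_mul_left n ht
  _ = m*n := Nat.mul_comm n m
/-! ### Family A : `n = 1`, tour `i ↦ (i, 2i)` -/

def fA : ℕ → ℤ × ℤ := fun i => ((i:ℤ), 2*(i:ℤ))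

lemma famA (m : ℕ) (hm : 0 < m) :
    ∃ (s e : ℤ × ℤ) (w : knightGraph.Walk s e),
      phi m 1 s = phi m 1 e ∧ w.length = m * 1 ∧
      ∀ q ∈ boardSet m 1, ∃! i : Fin (m * 1), phi m 1 (w.getVert i) = q := by
  apply pack m 1 hm one_pos fA
  · intro i _
    apply knight_adj 1 2 (Or.inl ⟨by norm_num, by norm_num⟩) <;>
      simp only [fA] <;> push_cast <;> ring
  · show phi m 1 (fA 0) = phi m 1 (fA (m*1))
    simp only [fA]
    rw [phi_eval m 1 one_pos 0 _ _ (by norm_num) (by norm_num),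
        phi_eval m 1 one_pos (2*((m*1:ℕ):ℤ)) _ _ (by norm_num) (by norm_num)]
    rw [if_pos Even.zero, if_pos ⟨((m*1:ℕ):ℤ), by ring⟩]
    push_cast
    simp
  · rintro ⟨u, v⟩ ⟨hu0, hum, hv0, hv1⟩
    have hv : v = 0 := by omega
    subst hv
    refine ⟨u.toNat, by omega, ?_⟩
    simp only [fA]
    rw [phi_eval m 1 one_pos (2*(u.toNat:ℤ)) _ _ (by omega) (by omega)]
    rw [if_pos ⟨(u.toNat:ℤ), by ring⟩]
    have h1 : ((u.toNat:ℕ) : ℤ) = u := by omega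
    rw [h1, Int.emod_eq_of_lt hu0 hum]
    norm_num
/-! ### Family B : `n = 2`, `m` odd, tour `2t+c ↦ (4t+2c, c)` -/

def fB : ℕ → ℤ × ℤ := fun i => (4*((i/2 : ℕ):ℤ) + 2*((i%2 : ℕ):ℤ), ((i%2 : ℕ):ℤ))

lemma famB (m : ℕ) (hm : 0 < m) (hodd : m % 2 = 1) :
    ∃ (s e : ℤ × ℤ) (w : knightGraph.Walk s e),
      phi m 2 s = phi m 2 e ∧ w.length = m * 2 ∧
      ∀ q ∈ boardSet m 2, ∃! i : Fin (m * 2), phi m 2 (w.getVert i) = q := by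
  apply pack m 2 hm (by norm_num) fB
  · intro i _
    rcases (by omega : i % 2 = 0 ∨ i % 2 = 1) with h | h
    · have d1 : (i+1)/2 = i/2 := by omega
      have d2 : (i+1)%2 = 1 := by omega
      apply knight_adj 2 1 (Or.inr ⟨by norm_num, by norm_num⟩) <;>
        simp only [fB, d1, d2, h] <;> push_cast <;> ring
    · have d1 : (i+1)/2 = i/2 + 1 := by omega
      have d2 : (i+1)%2 = 0 := by omega
      apply knight_adj 2 (-1) (Or.inr ⟨by norm_num, by norm_num⟩) <;>
        simp only [fB, d1, d2, h] <;> push_cast <;> ring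
  · show phi m 2 (fB 0) = phi m 2 (fB (m*2))
    have d1 : (m*2)/2 = m := by omega
    have d2 : (m*2)%2 = 0 := by omega
    have L : phi m 2 (fB 0) = (0, 0) := by
      simp only [fB]
      rw [phi_eval m 2 (by norm_num) 0 _ _ (by norm_num) (by norm_num), if_pos evenZ0]
      norm_num
    have R : phi m 2 (fB (m*2)) = (0, 0) := by
      simp only [fB, d1, d2]
      rw [phi_eval m 2 (by norm_num) 0 _ _ (by norm_num) (by norm_num), if_pos evenZ0]
      rw [Prod.mk.injEq]
      refine ⟨?_, by norm_num⟩
      rw [show 4*((m:ℕ):ℤ) + 2*((0:ℕ):ℤ) = ((m:ℕ):ℤ) * 4 by push_cast; ring]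
      exact mul_emod_zero _ _
    rw [L, R]
  · rintro ⟨u, v⟩ ⟨hu0, hum, hv0, hv2⟩
    obtain ⟨M, hM⟩ : ∃ M, m = 2*M+1 := ⟨m/2, by omega⟩
    have hde : (4:ℤ) * (((M:ℤ)+1)^2) % (m:ℤ) = 1 % (m:ℤ) := by
      rw [show (4:ℤ) * (((M:ℤ)+1)^2) = 1 + (m:ℤ)*((m:ℤ)+2) by
        rw [show (m:ℤ) = 2*(M:ℤ)+1 by exact_mod_cast congrArg Nat.cast hM]; ring]
      rw [Int.add_mul_emod_self_left]
    rcases (by omega : v = 0 ∨ v = 1) with rfl | rfl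
    · obtain ⟨t, htm, ht⟩ := keyd m 4 (((M:ℤ)+1)^2) 0 u hde hu0 hum
      refine ⟨2*t, by omega, ?_⟩
      have d1 : (2*t)/2 = t := by omega
      have d2 : (2*t)%2 = 0 := by omega
      simp only [fB, d1, d2]
      rw [phi_eval m 2 (by norm_num) 0 _ _ (by norm_num) (by norm_num), if_pos evenZ0]
      rw [Prod.mk.injEq]
      refine ⟨?_, by norm_num⟩
      rw [← ht]
      try congr 1
      all_goals push_cast
      all_goals ring
    · obtain ⟨t, htm, ht⟩ := keyd m 4 (((M:ℤ)+1)^2) 2 u hde hu0 hum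
      refine ⟨2*t+1, by omega, ?_⟩
      have d1 : (2*t+1)/2 = t := by omega
      have d2 : (2*t+1)%2 = 1 := by omega
      simp only [fB, d1, d2]
      rw [phi_eval m 2 (by norm_num) 0 _ _ (by norm_num) (by norm_num), if_pos evenZ0]
      rw [Prod.mk.injEq]
      refine ⟨?_, by norm_num⟩
      rw [← ht]
      try congr 1
      all_goals push_cast
      all_goals ring
/-! ### Family C : `n = 2`, `m` even -/

def cOff : ℕ → ℤ × ℤ
  | 0 => (0, 0)
  | 1 => (1, 2)
  | 2 => (3, 3)
  | _ => (4, 1)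

def fC : ℕ → ℤ × ℤ := fun i => (2*((i/4 : ℕ):ℤ) + (cOff (i%4)).1, (cOff (i%4)).2)

lemma famC (m : ℕ) (hm : 0 < m) (heven : m % 2 = 0) :
    ∃ (s e : ℤ × ℤ) (w : knightGraph.Walk s e),
      phi m 2 s = phi m 2 e ∧ w.length = m * 2 ∧
      ∀ q ∈ boardSet m 2, ∃! i : Fin (m * 2), phi m 2 (w.getVert i) = q := by
  obtain ⟨M, hM⟩ : ∃ M, m = 2*M := ⟨m/2, by omega⟩
  have hM0 : 0 < M := by omega
  have hmM : (m:ℤ) = 2*(M:ℤ) := by exact_mod_cast congrArg Nat.cast hM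
  apply pack m 2 hm (by norm_num) fC
  · intro i _
    rcases (by omega : i % 4 = 0 ∨ i % 4 = 1 ∨ i % 4 = 2 ∨ i % 4 = 3) with h | h | h | h
    · have d1 : (i+1)/4 = i/4 := by omega
      have d2 : (i+1)%4 = 1 := by omega
      apply knight_adj 1 2 (Or.inl ⟨by norm_num, by norm_num⟩) <;>
        simp only [fC, d1, d2, h, cOff] <;> push_cast <;> ring
    · have d1 : (i+1)/4 = i/4 := by omega
      have d2 : (i+1)%4 = 2 := by omega
      apply knight_adj 2 1 (Or.inr ⟨by norm_num, by norm_num⟩) <;>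
        simp only [fC, d1, d2, h, cOff] <;> push_cast <;> ring
    · have d1 : (i+1)/4 = i/4 := by omega
      have d2 : (i+1)%4 = 3 := by omega
      apply knight_adj 1 (-2) (Or.inl ⟨by norm_num, by norm_num⟩) <;>
        simp only [fC, d1, d2, h, cOff] <;> push_cast <;> ring
    · have d1 : (i+1)/4 = i/4 + 1 := by omega
      have d2 : (i+1)%4 = 0 := by omega
      apply knight_adj (-2) (-1) (Or.inr ⟨by norm_num, by norm_num⟩) <;>
        simp only [fC, d1, d2, h, cOff] <;> push_cast <;> ring
  · show phi m 2 (fC 0) = phi m 2 (fC (m*2))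
    have d1 : (m*2)/4 = M := by omega
    have d2 : (m*2)%4 = 0 := by omega
    have L : phi m 2 (fC 0) = (0, 0) := by
      simp only [fC, cOff]
      rw [phi_eval m 2 (by norm_num) 0 _ _ (by norm_num) (by norm_num), if_pos evenZ0]
      norm_num
    have R : phi m 2 (fC (m*2)) = (0, 0) := by
      simp only [fC, d1, d2, cOff]
      rw [phi_eval m 2 (by norm_num) 0 _ _ (by norm_num) (by norm_num), if_pos evenZ0]
      rw [Prod.mk.injEq]
      refine ⟨?_, by norm_num⟩
      rw [show 2*((M:ℕ):ℤ) + ((0,0) : ℤ×ℤ).1 = ((m:ℕ):ℤ) * 1 by rw [hmM]; push_cast; ring]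
      exact mul_emod_zero _ _
    rw [L, R]
  · rintro ⟨u, v⟩ ⟨hu0, hum, hv0, hv2⟩
    have hum' : u < 2*(M:ℤ) := by omega
    rcases (by omega : v = 0 ∨ v = 1) with rfl | rfl
    · rcases Int.even_or_odd u with ⟨r, hr⟩ | ⟨r, hr⟩
      · obtain ⟨t, htM, ht⟩ := key2 M hM0 0 u hu0 hum' (by omega)
        refine ⟨4*t, by omega, ?_⟩
        have d1 : (4*t)/4 = t := by omega
        have d2 : (4*t)%4 = 0 := by omega
        simp only [fC, d1, d2, cOff]
        rw [phi_eval m 2 (by norm_num) 0 _ _ (by norm_num) (by norm_num), if_pos evenZ0]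
        rw [Prod.mk.injEq]
        refine ⟨?_, by norm_num⟩
        rw [hmM]
        rw [← ht]
        try congr 1
        all_goals push_cast
        all_goals ring
      · obtain ⟨t, htM, ht⟩ := key2' M hM0 (-1) u hu0 hum' (by omega)
        refine ⟨4*t+1, by omega, ?_⟩
        have d1 : (4*t+1)/4 = t := by omega
        have d2 : (4*t+1)%4 = 1 := by omega
        simp only [fC, d1, d2, cOff]
        rw [phi_eval m 2 (by norm_num) 1 _ _ (by norm_num) (by norm_num), if_neg nevenZ1]
        rw [Prod.mk.injEq]
        refine ⟨?_, by norm_num⟩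
        rw [hmM]
        rw [← ht]
        try congr 1
        all_goals push_cast
        all_goals ring
    · rcases Int.even_or_odd u with ⟨r, hr⟩ | ⟨r, hr⟩
      · obtain ⟨t, htM, ht⟩ := key2 M hM0 4 u hu0 hum' (by omega)
        refine ⟨4*t+3, by omega, ?_⟩
        have d1 : (4*t+3)/4 = t := by omega
        have d2 : (4*t+3)%4 = 3 := by omega
        simp only [fC, d1, d2, cOff]
        rw [phi_eval m 2 (by norm_num) 0 _ _ (by norm_num) (by norm_num), if_pos evenZ0]
        rw [Prod.mk.injEq]
        refine ⟨?_, by norm_num⟩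
        rw [hmM]
        rw [← ht]
        try congr 1
        all_goals push_cast
        all_goals ring
      · obtain ⟨t, htM, ht⟩ := key2' M hM0 (-3) u hu0 hum' (by omega)
        refine ⟨4*t+2, by omega, ?_⟩
        have d1 : (4*t+2)/4 = t := by omega
        have d2 : (4*t+2)%4 = 2 := by omega
        simp only [fC, d1, d2, cOff]
        rw [phi_eval m 2 (by norm_num) 1 _ _ (by norm_num) (by norm_num), if_neg nevenZ1]
        rw [Prod.mk.injEq]
        refine ⟨?_, by norm_num⟩
        rw [hmM]
        rw [← ht]
        try congr 1
        all_goals push_cast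
        all_goals ring
/-! ### Family H : `n = 4`, `m` even: period-8 motif with drift `(-2,0)` -/

def hOff : ℕ → ℤ × ℤ
  | 0 => (0, 0)
  | 1 => (-2, -1)
  | 2 => (-4, -2)
  | 3 => (-6, -3)
  | 4 => (-7, -5)
  | 5 => (-5, -4)
  | 6 => (-3, -3)
  | _ => (-1, -2)

def fH : ℕ → ℤ × ℤ := fun i => (-2*((i/8 : ℕ):ℤ) + (hOff (i%8)).1, (hOff (i%8)).2)

lemma famH (m : ℕ) (hm : 0 < m) (heven : m % 2 = 0) :
    ∃ (s e : ℤ × ℤ) (w : knightGraph.Walk s e),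
      phi m 4 s = phi m 4 e ∧ w.length = m * 4 ∧
      ∀ q ∈ boardSet m 4, ∃! i : Fin (m * 4), phi m 4 (w.getVert i) = q := by
  obtain ⟨M, hM⟩ : ∃ M, m = 2*M := ⟨m/2, by omega⟩
  have hM0 : 0 < M := by omega
  have hmM : (m:ℤ) = 2*(M:ℤ) := by exact_mod_cast congrArg Nat.cast hM
  apply pack m 4 hm (by norm_num) fH
  · intro i _
    rcases (by omega : i % 8 = 0 ∨ i % 8 = 1 ∨ i % 8 = 2 ∨ i % 8 = 3 ∨ i % 8 = 4 ∨
        i % 8 = 5 ∨ i % 8 = 6 ∨ i % 8 = 7) with h | h | h | h | h | h | h | h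
    · have d1 : (i+1)/8 = i/8 := by omega
      have d2 : (i+1)%8 = 1 := by omega
      apply knight_adj (-2) (-1) (Or.inr ⟨by norm_num, by norm_num⟩) <;>
        simp only [fH, d1, d2, h, hOff] <;> push_cast <;> ring
    · have d1 : (i+1)/8 = i/8 := by omega
      have d2 : (i+1)%8 = 2 := by omega
      apply knight_adj (-2) (-1) (Or.inr ⟨by norm_num, by norm_num⟩) <;>
        simp only [fH, d1, d2, h, hOff] <;> push_cast <;> ring
    · have d1 : (i+1)/8 = i/8 := by omega
      have d2 : (i+1)%8 = 3 := by omega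
      apply knight_adj (-2) (-1) (Or.inr ⟨by norm_num, by norm_num⟩) <;>
        simp only [fH, d1, d2, h, hOff] <;> push_cast <;> ring
    · have d1 : (i+1)/8 = i/8 := by omega
      have d2 : (i+1)%8 = 4 := by omega
      apply knight_adj (-1) (-2) (Or.inl ⟨by norm_num, by norm_num⟩) <;>
        simp only [fH, d1, d2, h, hOff] <;> push_cast <;> ring
    · have d1 : (i+1)/8 = i/8 := by omega
      have d2 : (i+1)%8 = 5 := by omega
      apply knight_adj 2 1 (Or.inr ⟨by norm_num, by norm_num⟩) <;>
        simp only [fH, d1, d2, h, hOff] <;> push_cast <;> ring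
    · have d1 : (i+1)/8 = i/8 := by omega
      have d2 : (i+1)%8 = 6 := by omega
      apply knight_adj 2 1 (Or.inr ⟨by norm_num, by norm_num⟩) <;>
        simp only [fH, d1, d2, h, hOff] <;> push_cast <;> ring
    · have d1 : (i+1)/8 = i/8 := by omega
      have d2 : (i+1)%8 = 7 := by omega
      apply knight_adj 2 1 (Or.inr ⟨by norm_num, by norm_num⟩) <;>
        simp only [fH, d1, d2, h, hOff] <;> push_cast <;> ring
    · have d1 : (i+1)/8 = i/8 + 1 := by omega
      have d2 : (i+1)%8 = 0 := by omega
      apply knight_adj (-1) 2 (Or.inl ⟨by norm_num, by norm_num⟩) <;>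
        simp only [fH, d1, d2, h, hOff] <;> push_cast <;> ring
  · show phi m 4 (fH 0) = phi m 4 (fH (m*4))
    have d1 : (m*4)/8 = M := by omega
    have d2 : (m*4)%8 = 0 := by omega
    have L : phi m 4 (fH 0) = (0, 0) := by
      simp only [fH, hOff]
      rw [phi_eval m 4 (by norm_num) 0 _ _ (by norm_num) (by norm_num), if_pos evenZ0]
      norm_num
    have R : phi m 4 (fH (m*4)) = (0, 0) := by
      simp only [fH, d1, d2, hOff]
      rw [phi_eval m 4 (by norm_num) 0 _ _ (by norm_num) (by norm_num), if_pos evenZ0]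
      rw [Prod.mk.injEq]
      refine ⟨?_, by norm_num⟩
      rw [show -2*((M:ℕ):ℤ) + ((0,0) : ℤ×ℤ).1 = ((m:ℕ):ℤ) * (-1) by rw [hmM]; push_cast; ring]
      exact mul_emod_zero _ _
    rw [L, R]
  · rintro ⟨u, v⟩ ⟨hu0, hum, hv0, hv4⟩
    have hum' : u < 2*(M:ℤ) := by omega
    rcases (by omega : v = 0 ∨ v = 1 ∨ v = 2 ∨ v = 3) with rfl | rfl | rfl | rfl
    · rcases Int.even_or_odd u with ⟨r, hr⟩ | ⟨r, hr⟩
      · obtain ⟨t, htM, ht⟩ := key2' M hM0 0 u hu0 hum' (by omega)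
        refine ⟨8*t, by omega, ?_⟩
        have d1 : (8*t)/8 = t := by omega
        have d2 : (8*t)%8 = 0 := by omega
        simp only [fH, d1, d2, hOff]
        rw [phi_eval m 4 (by norm_num) 0 _ _ (by norm_num) (by norm_num), if_pos evenZ0]
        rw [Prod.mk.injEq]
        refine ⟨?_, by norm_num⟩
        rw [hmM, ← ht]
        try congr 1
        all_goals push_cast
        all_goals ring
      · obtain ⟨t, htM, ht⟩ := key2 M hM0 5 u hu0 hum' (by omega)
        refine ⟨8*t+5, by omega, ?_⟩
        have d1 : (8*t+5)/8 = t := by omega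
        have d2 : (8*t+5)%8 = 5 := by omega
        simp only [fH, d1, d2, hOff]
        rw [phi_eval m 4 (by norm_num) (-1) _ _ (by norm_num) (by norm_num), if_neg nevenZm1]
        rw [Prod.mk.injEq]
        refine ⟨?_, by norm_num⟩
        rw [hmM, ← ht]
        try congr 1
        all_goals push_cast
        all_goals ring
    · rcases Int.even_or_odd u with ⟨r, hr⟩ | ⟨r, hr⟩
      · obtain ⟨t, htM, ht⟩ := key2 M hM0 6 u hu0 hum' (by omega)
        refine ⟨8*t+3, by omega, ?_⟩
        have d1 : (8*t+3)/8 = t := by omega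
        have d2 : (8*t+3)%8 = 3 := by omega
        simp only [fH, d1, d2, hOff]
        rw [phi_eval m 4 (by norm_num) (-1) _ _ (by norm_num) (by norm_num), if_neg nevenZm1]
        rw [Prod.mk.injEq]
        refine ⟨?_, by norm_num⟩
        rw [hmM, ← ht]
        try congr 1
        all_goals push_cast
        all_goals ring
      · obtain ⟨t, htM, ht⟩ := key2 M hM0 3 u hu0 hum' (by omega)
        refine ⟨8*t+6, by omega, ?_⟩
        have d1 : (8*t+6)/8 = t := by omega
        have d2 : (8*t+6)%8 = 6 := by omega
        simp only [fH, d1, d2, hOff]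
        rw [phi_eval m 4 (by norm_num) (-1) _ _ (by norm_num) (by norm_num), if_neg nevenZm1]
        rw [Prod.mk.injEq]
        refine ⟨?_, by norm_num⟩
        rw [hmM, ← ht]
        try congr 1
        all_goals push_cast
        all_goals ring
    · rcases Int.even_or_odd u with ⟨r, hr⟩ | ⟨r, hr⟩
      · obtain ⟨t, htM, ht⟩ := key2 M hM0 4 u hu0 hum' (by omega)
        refine ⟨8*t+2, by omega, ?_⟩
        have d1 : (8*t+2)/8 = t := by omega
        have d2 : (8*t+2)%8 = 2 := by omega
        simp only [fH, d1, d2, hOff]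
        rw [phi_eval m 4 (by norm_num) (-1) _ _ (by norm_num) (by norm_num), if_neg nevenZm1]
        rw [Prod.mk.injEq]
        refine ⟨?_, by norm_num⟩
        rw [hmM, ← ht]
        try congr 1
        all_goals push_cast
        all_goals ring
      · obtain ⟨t, htM, ht⟩ := key2 M hM0 1 u hu0 hum' (by omega)
        refine ⟨8*t+7, by omega, ?_⟩
        have d1 : (8*t+7)/8 = t := by omega
        have d2 : (8*t+7)%8 = 7 := by omega
        simp only [fH, d1, d2, hOff]
        rw [phi_eval m 4 (by norm_num) (-1) _ _ (by norm_num) (by norm_num), if_neg nevenZm1]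
        rw [Prod.mk.injEq]
        refine ⟨?_, by norm_num⟩
        rw [hmM, ← ht]
        try congr 1
        all_goals push_cast
        all_goals ring
    · rcases Int.even_or_odd u with ⟨r, hr⟩ | ⟨r, hr⟩
      · obtain ⟨t, htM, ht⟩ := key2 M hM0 2 u hu0 hum' (by omega)
        refine ⟨8*t+1, by omega, ?_⟩
        have d1 : (8*t+1)/8 = t := by omega
        have d2 : (8*t+1)%8 = 1 := by omega
        simp only [fH, d1, d2, hOff]
        rw [phi_eval m 4 (by norm_num) (-1) _ _ (by norm_num) (by norm_num), if_neg nevenZm1]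
        rw [Prod.mk.injEq]
        refine ⟨?_, by norm_num⟩
        rw [hmM, ← ht]
        try congr 1
        all_goals push_cast
        all_goals ring
      · obtain ⟨t, htM, ht⟩ := key2' M hM0 (-7) u hu0 hum' (by omega)
        refine ⟨8*t+4, by omega, ?_⟩
        have d1 : (8*t+4)/8 = t := by omega
        have d2 : (8*t+4)%8 = 4 := by omega
        simp only [fH, d1, d2, hOff]
        rw [phi_eval m 4 (by norm_num) (-2) _ _ (by norm_num) (by norm_num), if_pos evenZm2]
        rw [Prod.mk.injEq]
        refine ⟨?_, by norm_num⟩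
        rw [hmM, ← ht]
        try congr 1
        all_goals push_cast
        all_goals ring
/-! ### Family D : `n` odd, `n ≥ 3`, any `m`: period-`n` motif with drift `(1,0)` -/

def fD (n : ℕ) : ℕ → ℤ × ℤ := fun i =>
  if 2*(i % n) < n then (((i / n : ℕ):ℤ) + ((i % n : ℕ):ℤ), 2*((i % n : ℕ):ℤ))
  else (((i / n : ℕ):ℤ) + (n:ℤ) + 2 - ((i % n : ℕ):ℤ), 2*(n:ℤ) - 1 - 2*((i % n : ℕ):ℤ))

lemma famD (m n : ℕ) (hm : 0 < m) (hodd : n % 2 = 1) (hn3 : 3 ≤ n) :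
    ∃ (s e : ℤ × ℤ) (w : knightGraph.Walk s e),
      phi m n s = phi m n e ∧ w.length = m * n ∧
      ∀ q ∈ boardSet m n, ∃! i : Fin (m * n), phi m n (w.getVert i) = q := by
  have hn : 0 < n := by omega
  apply pack m n hm hn (fD n)
  · intro i _
    set t := i / n with ht
    set c := i % n with hc
    have h1 : n*t + c = i := Nat.div_add_mod i n
    have hcn : c < n := Nat.mod_lt _ hn
    rcases (by omega : (2*(c+1) < n) ∨ (2*c < n ∧ n ≤ 2*(c+1) ∧ c+1 < n) ∨
        (n ≤ 2*c ∧ c+1 < n) ∨ (c+1 = n)) with hcase | ⟨hc1, hc2, hc3⟩ | ⟨hc1, hc2⟩ | hcase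
    · obtain ⟨d1, d2⟩ := dm_eq n t (c+1) (i+1) hn (by omega) (by omega)
      apply knight_adj 1 2 (Or.inl ⟨by norm_num, by norm_num⟩) <;>
        simp only [fD, ← ht, ← hc, d1, d2, if_pos (show 2*(c+1) < n by omega),
          if_pos (show 2*c < n by omega)] <;> push_cast <;> omega
    · obtain ⟨d1, d2⟩ := dm_eq n t (c+1) (i+1) hn (by omega) (by omega)
      apply knight_adj 2 (-1) (Or.inr ⟨by norm_num, by norm_num⟩) <;>
        simp only [fD, ← ht, ← hc, d1, d2, if_neg (show ¬ 2*(c+1) < n by omega),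
          if_pos (show 2*c < n by omega)] <;> push_cast <;> omega
    · obtain ⟨d1, d2⟩ := dm_eq n t (c+1) (i+1) hn (by omega) (by omega)
      apply knight_adj (-1) (-2) (Or.inl ⟨by norm_num, by norm_num⟩) <;>
        simp only [fD, ← ht, ← hc, d1, d2, if_neg (show ¬ 2*(c+1) < n by omega),
          if_neg (show ¬ 2*c < n by omega)] <;> push_cast <;> omega
    · obtain ⟨d1, d2⟩ := dm_eq n (t+1) 0 (i+1) hn hn
        (by have e : n*(t+1) = n*t+n := (by ring); omega)
      apply knight_adj (-2) (-1) (Or.inr ⟨by norm_num, by norm_num⟩) <;>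
        simp only [fD, ← ht, ← hc, d1, d2, if_pos (show 2*0 < n by omega),
          if_neg (show ¬ 2*c < n by omega)] <;> push_cast <;> omega
  · show phi m n (fD n 0) = phi m n (fD n (m*n))
    obtain ⟨d1, d2⟩ := dm_eq n m 0 (m*n) hn hn (by ring)
    have L : phi m n (fD n 0) = (0, 0) := by
      simp only [fD, Nat.zero_div, Nat.zero_mod, if_pos (show 2*0 < n by omega)]
      rw [phi_eval m n hn 0 _ _ (by push_cast; omega) (by push_cast; omega), if_pos evenZ0]
      norm_num
    have R : phi m n (fD n (m*n)) = (0, 0) := by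
      simp only [fD, d1, d2, if_pos (show 2*0 < n by omega)]
      rw [phi_eval m n hn 0 _ _ (by push_cast; omega) (by push_cast; omega), if_pos evenZ0]
      rw [Prod.mk.injEq]
      refine ⟨?_, by push_cast; ring⟩
      rw [show ((m:ℕ):ℤ) + ((0:ℕ):ℤ) = ((m:ℕ):ℤ) * 1 by push_cast; ring]
      exact mul_emod_zero _ _
    rw [L, R]
  · rintro ⟨u, v⟩ ⟨hu0, hum, hv0, hvn⟩
    rcases Nat.even_or_odd v.toNat with ⟨r, hr⟩ | ⟨r, hr⟩
    · -- v = 2r, ascending visit c = r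
      obtain ⟨t, htm, ht⟩ := key1 m (r:ℤ) u hu0 hum
      refine ⟨n*t + r, idx_lt n t r m htm (by omega), ?_⟩
      obtain ⟨d1, d2⟩ := dm_eq n t r (n*t+r) hn (by omega) rfl
      simp only [fD, d1, d2, if_pos (show 2*r < n by omega)]
      rw [phi_eval m n hn 0 _ _ (by push_cast; omega) (by push_cast; omega), if_pos evenZ0]
      rw [Prod.mk.injEq]
      refine ⟨?_, by push_cast; omega⟩
      rw [← ht]
      try congr 1
      all_goals push_cast
      all_goals ring
    · -- v = 2r+1, descending visit c = n-1-r
      obtain ⟨t, htm, ht⟩ := key1 m ((n:ℤ)+2-((n-1-r : ℕ):ℤ)) u hu0 hum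
      refine ⟨n*t + (n-1-r), idx_lt n t (n-1-r) m htm (by omega), ?_⟩
      obtain ⟨d1, d2⟩ := dm_eq n t (n-1-r) (n*t+(n-1-r)) hn (by omega) rfl
      simp only [fD, d1, d2, if_neg (show ¬ 2*(n-1-r) < n by omega)]
      rw [phi_eval m n hn 0 _ _ (by push_cast; omega) (by push_cast; omega), if_pos evenZ0]
      rw [Prod.mk.injEq]
      refine ⟨?_, by push_cast; omega⟩
      rw [← ht]
      try congr 1
      all_goals push_cast
      all_goals omega
/-! ### Family E : `n` even, `n ≥ 4`, `m` odd: period-`n` motif with drift `(2,0)` -/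

def fE (n : ℕ) : ℕ → ℤ × ℤ := fun i =>
  if i % n < n/2 then (2*((i/n : ℕ):ℤ) + ((i % n : ℕ):ℤ), 2*((i % n : ℕ):ℤ))
  else if i % n = n/2 then (2*((i/n : ℕ):ℤ) + ((n/2 : ℕ):ℤ) + 1, (n:ℤ) - 1)
  else (2*((i/n : ℕ):ℤ) + (n:ℤ) + 3 - ((i % n : ℕ):ℤ), 2*(n:ℤ) - 1 - 2*((i % n : ℕ):ℤ))

lemma famE (m n : ℕ) (hm : 0 < m) (hmodd : m % 2 = 1) (hneven : n % 2 = 0) (hn4 : 4 ≤ n) :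
    ∃ (s e : ℤ × ℤ) (w : knightGraph.Walk s e),
      phi m n s = phi m n e ∧ w.length = m * n ∧
      ∀ q ∈ boardSet m n, ∃! i : Fin (m * n), phi m n (w.getVert i) = q := by
  have hn : 0 < n := by omega
  apply pack m n hm hn (fE n)
  · intro i _
    set t := i / n with ht
    set c := i % n with hc
    have h1 : n*t + c = i := Nat.div_add_mod i n
    have hcn : c < n := Nat.mod_lt _ hn
    rcases (by omega : (c+1 < n/2) ∨ (c+1 = n/2) ∨ (c = n/2) ∨ (n/2 < c ∧ c+1 < n) ∨
        (c+1 = n)) with hcase | hcase | hcase | ⟨hc1, hc2⟩ | hcase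
    · obtain ⟨d1, d2⟩ := dm_eq n t (c+1) (i+1) hn (by omega) (by omega)
      apply knight_adj 1 2 (Or.inl ⟨by norm_num, by norm_num⟩) <;>
        simp only [fE, ← ht, ← hc, d1, d2, if_pos (show c+1 < n/2 by omega),
          if_pos (show c < n/2 by omega)] <;> push_cast <;> omega
    · obtain ⟨d1, d2⟩ := dm_eq n t (c+1) (i+1) hn (by omega) (by omega)
      apply knight_adj 2 1 (Or.inr ⟨by norm_num, by norm_num⟩) <;>
        simp only [fE, ← ht, ← hc, d1, d2, if_neg (show ¬ c+1 < n/2 by omega),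
          if_pos (show c+1 = n/2 by omega), if_pos (show c < n/2 by omega)] <;>
        push_cast <;> omega
    · obtain ⟨d1, d2⟩ := dm_eq n t (c+1) (i+1) hn (by omega) (by omega)
      apply knight_adj 1 (-2) (Or.inl ⟨by norm_num, by norm_num⟩) <;>
        simp only [fE, ← ht, ← hc, d1, d2, if_neg (show ¬ c+1 < n/2 by omega),
          if_neg (show ¬ c+1 = n/2 by omega), if_neg (show ¬ c < n/2 by omega),
          if_pos (show c = n/2 by omega)] <;> push_cast <;> omega
    · obtain ⟨d1, d2⟩ := dm_eq n t (c+1) (i+1) hn (by omega) (by omega)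
      apply knight_adj (-1) (-2) (Or.inl ⟨by norm_num, by norm_num⟩) <;>
        simp only [fE, ← ht, ← hc, d1, d2, if_neg (show ¬ c+1 < n/2 by omega),
          if_neg (show ¬ c+1 = n/2 by omega), if_neg (show ¬ c < n/2 by omega),
          if_neg (show ¬ c = n/2 by omega)] <;> push_cast <;> omega
    · obtain ⟨d1, d2⟩ := dm_eq n (t+1) 0 (i+1) hn hn
        (by have e : n*(t+1) = n*t+n := (by ring); omega)
      apply knight_adj (-2) (-1) (Or.inr ⟨by norm_num, by norm_num⟩) <;>
        simp only [fE, ← ht, ← hc, d1, d2, if_pos (show 0 < n/2 by omega),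
          if_neg (show ¬ c < n/2 by omega), if_neg (show ¬ c = n/2 by omega)] <;>
        push_cast <;> omega
  · show phi m n (fE n 0) = phi m n (fE n (m*n))
    obtain ⟨d1, d2⟩ := dm_eq n m 0 (m*n) hn hn (by ring)
    have L : phi m n (fE n 0) = (0, 0) := by
      simp only [fE, Nat.zero_div, Nat.zero_mod, if_pos (show 0 < n/2 by omega)]
      rw [phi_eval m n hn 0 _ _ (by push_cast; omega) (by push_cast; omega), if_pos evenZ0]
      norm_num
    have R : phi m n (fE n (m*n)) = (0, 0) := by
      simp only [fE, d1, d2, if_pos (show 0 < n/2 by omega)]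
      rw [phi_eval m n hn 0 _ _ (by push_cast; omega) (by push_cast; omega), if_pos evenZ0]
      rw [Prod.mk.injEq]
      refine ⟨?_, by push_cast; ring⟩
      rw [show 2*((m:ℕ):ℤ) + ((0:ℕ):ℤ) = ((m:ℕ):ℤ) * 2 by push_cast; ring]
      exact mul_emod_zero _ _
    rw [L, R]
  · rintro ⟨u, v⟩ ⟨hu0, hum, hv0, hvn⟩
    obtain ⟨M, hM⟩ : ∃ M, m = 2*M+1 := ⟨m/2, by omega⟩
    have hde : (2:ℤ) * ((M:ℤ)+1) % (m:ℤ) = 1 % (m:ℤ) := by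
      rw [show (2:ℤ) * ((M:ℤ)+1) = 1 + (m:ℤ)*1 by
        rw [show (m:ℤ) = 2*(M:ℤ)+1 by exact_mod_cast congrArg Nat.cast hM]; ring]
      rw [Int.add_mul_emod_self_left]
    rcases Nat.even_or_odd v.toNat with ⟨r, hr⟩ | ⟨r, hr⟩
    · -- v = 2r, c = r < n/2
      obtain ⟨t, htm, ht⟩ := keyd m 2 ((M:ℤ)+1) (r:ℤ) u hde hu0 hum
      refine ⟨n*t + r, idx_lt n t r m htm (by omega), ?_⟩
      obtain ⟨d1, d2⟩ := dm_eq n t r (n*t+r) hn (by omega) rfl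
      simp only [fE, d1, d2, if_pos (show r < n/2 by omega)]
      rw [phi_eval m n hn 0 _ _ (by push_cast; omega) (by push_cast; omega), if_pos evenZ0]
      rw [Prod.mk.injEq]
      refine ⟨?_, by push_cast; omega⟩
      rw [← ht]
      try congr 1
      all_goals push_cast
      all_goals ring
    · rcases (by omega : v.toNat = n - 1 ∨ v.toNat + 1 < n) with hv | hv
      · -- v = n-1, c = n/2
        obtain ⟨t, htm, ht⟩ := keyd m 2 ((M:ℤ)+1) (((n/2 : ℕ):ℤ)+1) u hde hu0 hum
        refine ⟨n*t + n/2, idx_lt n t (n/2) m htm (by omega), ?_⟩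
        obtain ⟨d1, d2⟩ := dm_eq n t (n/2) (n*t+n/2) hn (by omega) rfl
        simp only [fE, d1, d2, if_neg (show ¬ n/2 < n/2 by omega), if_pos rfl]
        rw [phi_eval m n hn 0 _ _ (by push_cast; omega) (by push_cast; omega), if_pos evenZ0]
        rw [Prod.mk.injEq]
        refine ⟨?_, by push_cast; omega⟩
        rw [← ht]
        try congr 1
        all_goals push_cast
        all_goals ring
      · -- v = 2r+1 < n-1, c = n-1-r
        obtain ⟨t, htm, ht⟩ := keyd m 2 ((M:ℤ)+1) ((n:ℤ)+3-((n-1-r : ℕ):ℤ)) u hde hu0 hum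
        refine ⟨n*t + (n-1-r), idx_lt n t (n-1-r) m htm (by omega), ?_⟩
        obtain ⟨d1, d2⟩ := dm_eq n t (n-1-r) (n*t+(n-1-r)) hn (by omega) rfl
        simp only [fE, d1, d2, if_neg (show ¬ n-1-r < n/2 by omega),
          if_neg (show ¬ n-1-r = n/2 by omega)]
        rw [phi_eval m n hn 0 _ _ (by push_cast; omega) (by push_cast; omega), if_pos evenZ0]
        rw [Prod.mk.injEq]
        refine ⟨?_, by push_cast; omega⟩
        rw [← ht]
        try congr 1
        all_goals push_cast
        all_goals omega
/-! ### Family G : `m, n` even, `n ≥ 6`: period-`2n` double-visit motif with drift `(2,0)` -/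

def fG (n : ℕ) : ℕ → ℤ × ℤ := fun i =>
  if i % (2*n) < n/2 then (2*((i/(2*n) : ℕ):ℤ) + ((i % (2*n) : ℕ):ℤ), 2*((i % (2*n) : ℕ):ℤ))
  else if i % (2*n) = n/2 then (2*((i/(2*n) : ℕ):ℤ) + ((n/2 : ℕ):ℤ) + 1, (n:ℤ) - 1)
  else if i % (2*n) = n/2+1 then (2*((i/(2*n) : ℕ):ℤ) + ((n/2 : ℕ):ℤ) + 2, (n:ℤ) - 3)
  else if i % (2*n) = n/2+2 then (2*((i/(2*n) : ℕ):ℤ) + ((n/2 : ℕ):ℤ) + 4, (n:ℤ) - 2)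
  else if i % (2*n) ≤ n+2 then
    (2*((i/(2*n) : ℕ):ℤ) + (n:ℤ) + 5 - ((i % (2*n) : ℕ):ℤ), 2*(n:ℤ) + 5 - 2*((i % (2*n) : ℕ):ℤ))
  else if i % (2*n) = n+3 then (2*((i/(2*n) : ℕ):ℤ) + 1, 0)
  else if i % (2*n) ≤ n+n/2+1 then
    (2*((i/(2*n) : ℕ):ℤ) + ((i % (2*n) : ℕ):ℤ) - (n:ℤ) - 2, 2*((i % (2*n) : ℕ):ℤ) - 2*(n:ℤ) - 6)
  else
    (2*((i/(2*n) : ℕ):ℤ) + 2*(n:ℤ) + 3 - ((i % (2*n) : ℕ):ℤ), 4*(n:ℤ) - 1 - 2*((i % (2*n) : ℕ):ℤ))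

lemma famG (m n : ℕ) (hm : 0 < m) (hmeven : m % 2 = 0) (hneven : n % 2 = 0) (hn6 : 6 ≤ n) :
    ∃ (s e : ℤ × ℤ) (w : knightGraph.Walk s e),
      phi m n s = phi m n e ∧ w.length = m * n ∧
      ∀ q ∈ boardSet m n, ∃! i : Fin (m * n), phi m n (w.getVert i) = q := by
  have hn : 0 < n := by omega
  have hn2 : 0 < 2*n := by omega
  obtain ⟨M, hM⟩ : ∃ M, m = 2*M := ⟨m/2, by omega⟩
  have hM0 : 0 < M := by omega
  have hmM : (m:ℤ) = 2*(M:ℤ) := by exact_mod_cast congrArg Nat.cast hM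
  have hMn : M*(2*n) = m*n := by rw [hM]; ring
  apply pack m n hm hn (fG n)
  · intro i _
    set t := i / (2*n) with ht
    set c := i % (2*n) with hc
    have h1 : 2*n*t + c = i := Nat.div_add_mod i (2*n)
    have hcn : c < 2*n := Nat.mod_lt _ hn2
    rcases (by omega : (c+1 < n/2) ∨ (c+1 = n/2) ∨ (c = n/2) ∨ (c = n/2+1) ∨ (c = n/2+2) ∨ (n/2+3 ≤ c ∧ c+1 ≤ n+2) ∨ (c = n+2) ∨ (c = n+3) ∨ (n+4 ≤ c ∧ c+1 ≤ n+n/2+1) ∨ (c = n+n/2+1) ∨ (n+n/2+2 ≤ c ∧ c+1 ≤ 2*n-1) ∨ (c+1 = 2*n)) with hcase | hcase | hcase | hcase | hcase | ⟨hc1, hc2⟩ | hcase | hcase | ⟨hc1, hc2⟩ | hcase | ⟨hc1, hc2⟩ | hcase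
    · obtain ⟨d1, d2⟩ := dm_eq (2*n) t (c+1) (i+1) hn2 (by omega) (by omega)
      apply knight_adj (1) (2) (Or.inl ⟨by norm_num, by norm_num⟩) <;>
        simp only [ite_true, fG, ← ht, ← hc, d1, d2, if_pos (show c+1 < n/2 by omega), if_pos (show c < n/2 by omega)] <;> omega
    · obtain ⟨d1, d2⟩ := dm_eq (2*n) t (c+1) (i+1) hn2 (by omega) (by omega)
      apply knight_adj (2) (1) (Or.inr ⟨by norm_num, by norm_num⟩) <;>
        simp only [ite_true, fG, ← ht, ← hc, d1, d2, if_neg (show ¬ (c+1 < n/2) by omega), if_pos (show c+1 = n/2 by omega), if_pos (show c < n/2 by omega)] <;> omega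
    · obtain ⟨d1, d2⟩ := dm_eq (2*n) t (c+1) (i+1) hn2 (by omega) (by omega)
      apply knight_adj (1) (-2) (Or.inl ⟨by norm_num, by norm_num⟩) <;>
        simp only [ite_true, fG, ← ht, ← hc, d1, d2, if_neg (show ¬ (c+1 < n/2) by omega), if_neg (show ¬ (c+1 = n/2) by omega), if_pos (show c+1 = n/2+1 by omega), if_neg (show ¬ (c < n/2) by omega), if_pos (show c = n/2 by omega)] <;> omega
    · obtain ⟨d1, d2⟩ := dm_eq (2*n) t (c+1) (i+1) hn2 (by omega) (by omega)
      apply knight_adj (2) (1) (Or.inr ⟨by norm_num, by norm_num⟩) <;>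
        simp only [ite_true, fG, ← ht, ← hc, d1, d2, if_neg (show ¬ (c+1 < n/2) by omega), if_neg (show ¬ (c+1 = n/2) by omega), if_neg (show ¬ (c+1 = n/2+1) by omega), if_pos (show c+1 = n/2+2 by omega), if_neg (show ¬ (c < n/2) by omega), if_neg (show ¬ (c = n/2) by omega), if_pos (show c = n/2+1 by omega)] <;> omega
    · obtain ⟨d1, d2⟩ := dm_eq (2*n) t (c+1) (i+1) hn2 (by omega) (by omega)
      apply knight_adj (-2) (1) (Or.inr ⟨by norm_num, by norm_num⟩) <;>
        simp only [ite_true, fG, ← ht, ← hc, d1, d2, if_neg (show ¬ (c+1 < n/2) by omega), if_neg (show ¬ (c+1 = n/2) by omega), if_neg (show ¬ (c+1 = n/2+1) by omega), if_neg (show ¬ (c+1 = n/2+2) by omega), if_pos (show c+1 ≤ n+2 by omega), if_neg (show ¬ (c < n/2) by omega), if_neg (show ¬ (c = n/2) by omega), if_neg (show ¬ (c = n/2+1) by omega), if_pos (show c = n/2+2 by omega)] <;> omega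
    · obtain ⟨d1, d2⟩ := dm_eq (2*n) t (c+1) (i+1) hn2 (by omega) (by omega)
      apply knight_adj (-1) (-2) (Or.inl ⟨by norm_num, by norm_num⟩) <;>
        simp only [ite_true, fG, ← ht, ← hc, d1, d2, if_neg (show ¬ (c+1 < n/2) by omega), if_neg (show ¬ (c+1 = n/2) by omega), if_neg (show ¬ (c+1 = n/2+1) by omega), if_neg (show ¬ (c+1 = n/2+2) by omega), if_pos (show c+1 ≤ n+2 by omega), if_neg (show ¬ (c < n/2) by omega), if_neg (show ¬ (c = n/2) by omega), if_neg (show ¬ (c = n/2+1) by omega), if_neg (show ¬ (c = n/2+2) by omega), if_pos (show c ≤ n+2 by omega)] <;> omega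
    · obtain ⟨d1, d2⟩ := dm_eq (2*n) t (c+1) (i+1) hn2 (by omega) (by omega)
      apply knight_adj (-2) (-1) (Or.inr ⟨by norm_num, by norm_num⟩) <;>
        simp only [ite_true, fG, ← ht, ← hc, d1, d2, if_neg (show ¬ (c+1 < n/2) by omega), if_neg (show ¬ (c+1 = n/2) by omega), if_neg (show ¬ (c+1 = n/2+1) by omega), if_neg (show ¬ (c+1 = n/2+2) by omega), if_neg (show ¬ (c+1 ≤ n+2) by omega), if_pos (show c+1 = n+3 by omega), if_neg (show ¬ (c < n/2) by omega), if_neg (show ¬ (c = n/2) by omega), if_neg (show ¬ (c = n/2+1) by omega), if_neg (show ¬ (c = n/2+2) by omega), if_pos (show c ≤ n+2 by omega)] <;> omega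
    · obtain ⟨d1, d2⟩ := dm_eq (2*n) t (c+1) (i+1) hn2 (by omega) (by omega)
      apply knight_adj (1) (2) (Or.inl ⟨by norm_num, by norm_num⟩) <;>
        simp only [ite_true, fG, ← ht, ← hc, d1, d2, if_neg (show ¬ (c+1 < n/2) by omega), if_neg (show ¬ (c+1 = n/2) by omega), if_neg (show ¬ (c+1 = n/2+1) by omega), if_neg (show ¬ (c+1 = n/2+2) by omega), if_neg (show ¬ (c+1 ≤ n+2) by omega), if_neg (show ¬ (c+1 = n+3) by omega), if_pos (show c+1 ≤ n+n/2+1 by omega), if_neg (show ¬ (c < n/2) by omega), if_neg (show ¬ (c = n/2) by omega), if_neg (show ¬ (c = n/2+1) by omega), if_neg (show ¬ (c = n/2+2) by omega), if_neg (show ¬ (c ≤ n+2) by omega), if_pos (show c = n+3 by omega)] <;> omega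
    · obtain ⟨d1, d2⟩ := dm_eq (2*n) t (c+1) (i+1) hn2 (by omega) (by omega)
      apply knight_adj (1) (2) (Or.inl ⟨by norm_num, by norm_num⟩) <;>
        simp only [ite_true, fG, ← ht, ← hc, d1, d2, if_neg (show ¬ (c+1 < n/2) by omega), if_neg (show ¬ (c+1 = n/2) by omega), if_neg (show ¬ (c+1 = n/2+1) by omega), if_neg (show ¬ (c+1 = n/2+2) by omega), if_neg (show ¬ (c+1 ≤ n+2) by omega), if_neg (show ¬ (c+1 = n+3) by omega), if_pos (show c+1 ≤ n+n/2+1 by omega), if_neg (show ¬ (c < n/2) by omega), if_neg (show ¬ (c = n/2) by omega), if_neg (show ¬ (c = n/2+1) by omega), if_neg (show ¬ (c = n/2+2) by omega), if_neg (show ¬ (c ≤ n+2) by omega), if_neg (show ¬ (c = n+3) by omega), if_pos (show c ≤ n+n/2+1 by omega)] <;> omega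
    · obtain ⟨d1, d2⟩ := dm_eq (2*n) t (c+1) (i+1) hn2 (by omega) (by omega)
      apply knight_adj (2) (-1) (Or.inr ⟨by norm_num, by norm_num⟩) <;>
        simp only [ite_true, fG, ← ht, ← hc, d1, d2, if_neg (show ¬ (c+1 < n/2) by omega), if_neg (show ¬ (c+1 = n/2) by omega), if_neg (show ¬ (c+1 = n/2+1) by omega), if_neg (show ¬ (c+1 = n/2+2) by omega), if_neg (show ¬ (c+1 ≤ n+2) by omega), if_neg (show ¬ (c+1 = n+3) by omega), if_neg (show ¬ (c+1 ≤ n+n/2+1) by omega), if_neg (show ¬ (c < n/2) by omega), if_neg (show ¬ (c = n/2) by omega), if_neg (show ¬ (c = n/2+1) by omega), if_neg (show ¬ (c = n/2+2) by omega), if_neg (show ¬ (c ≤ n+2) by omega), if_neg (show ¬ (c = n+3) by omega), if_pos (show c ≤ n+n/2+1 by omega)] <;> omega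
    · obtain ⟨d1, d2⟩ := dm_eq (2*n) t (c+1) (i+1) hn2 (by omega) (by omega)
      apply knight_adj (-1) (-2) (Or.inl ⟨by norm_num, by norm_num⟩) <;>
        simp only [ite_true, fG, ← ht, ← hc, d1, d2, if_neg (show ¬ (c+1 < n/2) by omega), if_neg (show ¬ (c+1 = n/2) by omega), if_neg (show ¬ (c+1 = n/2+1) by omega), if_neg (show ¬ (c+1 = n/2+2) by omega), if_neg (show ¬ (c+1 ≤ n+2) by omega), if_neg (show ¬ (c+1 = n+3) by omega), if_neg (show ¬ (c+1 ≤ n+n/2+1) by omega), if_neg (show ¬ (c < n/2) by omega), if_neg (show ¬ (c = n/2) by omega), if_neg (show ¬ (c = n/2+1) by omega), if_neg (show ¬ (c = n/2+2) by omega), if_neg (show ¬ (c ≤ n+2) by omega), if_neg (show ¬ (c = n+3) by omega), if_neg (show ¬ (c ≤ n+n/2+1) by omega)] <;> omega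
    · obtain ⟨d1, d2⟩ := dm_eq (2*n) (t+1) 0 (i+1) hn2 hn2
        (by have e : 2*n*(t+1) = 2*n*t+2*n := (by ring); omega)
      apply knight_adj (-2) (-1) (Or.inr ⟨by norm_num, by norm_num⟩) <;>
        simp only [ite_true, fG, ← ht, ← hc, d1, d2, if_pos (show 0 < n/2 by omega), if_neg (show ¬ (c < n/2) by omega), if_neg (show ¬ (c = n/2) by omega), if_neg (show ¬ (c = n/2+1) by omega), if_neg (show ¬ (c = n/2+2) by omega), if_neg (show ¬ (c ≤ n+2) by omega), if_neg (show ¬ (c = n+3) by omega), if_neg (show ¬ (c ≤ n+n/2+1) by omega)] <;> omega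
  · show phi m n (fG n 0) = phi m n (fG n (m*n))
    obtain ⟨d1, d2⟩ := dm_eq (2*n) M 0 (m*n) hn2 hn2 (by rw [hM]; ring)
    have L : phi m n (fG n 0) = (0, 0) := by
      simp only [fG, Nat.zero_div, Nat.zero_mod, if_pos (show 0 < n/2 by omega)]
      rw [phi_eval m n hn 0 _ _ (by push_cast; omega) (by push_cast; omega), if_pos evenZ0]
      norm_num
    have R : phi m n (fG n (m*n)) = (0, 0) := by
      simp only [ite_true, fG, d1, d2, if_pos (show 0 < n/2 by omega)]
      rw [phi_eval m n hn 0 _ _ (by push_cast; omega) (by push_cast; omega), if_pos evenZ0]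
      rw [Prod.mk.injEq]
      refine ⟨?_, by push_cast; ring⟩
      rw [show 2*((M:ℕ):ℤ) + ((0:ℕ):ℤ) = ((m:ℕ):ℤ) * 1 by rw [hmM]; push_cast; ring]
      exact mul_emod_zero _ _
    rw [L, R]
  · rintro ⟨u, v⟩ ⟨hu0, hum, hv0, hvn⟩
    rcases Nat.even_or_odd v.toNat with ⟨r, hr⟩ | ⟨r, hr⟩
    · rcases Int.even_or_odd (u - (r:ℤ)) with ⟨w, hw⟩ | ⟨w, hw⟩
      · -- c = r, o = r
        obtain ⟨t, htM, ht⟩ := key2 M hM0 ((r:ℤ)) u hu0 (by omega) (by omega)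
        refine ⟨2*n*t + (r), by have h3 := idx_lt (2*n) t (r) M htM (by omega); omega, ?_⟩
        obtain ⟨d1, d2⟩ := dm_eq (2*n) t (r) (2*n*t + (r)) hn2 (by omega) rfl
        simp only [ite_true, fG, d1, d2, if_pos (show (r) < n/2 by omega)]
        rw [phi_eval m n hn 0 _ _ (by push_cast; omega) (by push_cast; omega), if_pos evenZ0]
        rw [Prod.mk.injEq]
        refine ⟨?_, by omega⟩
        rw [hmM, ← ht]
        try congr 1
        all_goals omega
      · rcases (by omega : r = 0 ∨ r = n/2 - 1 ∨ (1 ≤ r ∧ r ≤ n/2 - 2)) with h0 | h0 | h0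
        · -- c = n+3, o = 1
          obtain ⟨t, htM, ht⟩ := key2 M hM0 ((1:ℤ)) u hu0 (by omega) (by omega)
          refine ⟨2*n*t + (n+3), by have h3 := idx_lt (2*n) t (n+3) M htM (by omega); omega, ?_⟩
          obtain ⟨d1, d2⟩ := dm_eq (2*n) t (n+3) (2*n*t + (n+3)) hn2 (by omega) rfl
          simp only [ite_true, fG, d1, d2, if_neg (show ¬ ((n+3) < n/2) by omega), if_neg (show ¬ ((n+3) = n/2) by omega), if_neg (show ¬ ((n+3) = n/2+1) by omega), if_neg (show ¬ ((n+3) = n/2+2) by omega), if_neg (show ¬ ((n+3) ≤ n+2) by omega), if_pos (show (n+3) = n+3 by omega)]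
          rw [phi_eval m n hn 0 _ _ (by push_cast; omega) (by push_cast; omega), if_pos evenZ0]
          rw [Prod.mk.injEq]
          refine ⟨?_, by omega⟩
          rw [hmM, ← ht]
          try congr 1
          all_goals omega
        · -- c = n/2+2, o = n/2+4
          obtain ⟨t, htM, ht⟩ := key2 M hM0 (((n/2 : ℕ):ℤ)+4) u hu0 (by omega) (by omega)
          refine ⟨2*n*t + (n/2+2), by have h3 := idx_lt (2*n) t (n/2+2) M htM (by omega); omega, ?_⟩
          obtain ⟨d1, d2⟩ := dm_eq (2*n) t (n/2+2) (2*n*t + (n/2+2)) hn2 (by omega) rfl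
          simp only [ite_true, fG, d1, d2, if_neg (show ¬ ((n/2+2) < n/2) by omega), if_neg (show ¬ ((n/2+2) = n/2) by omega), if_neg (show ¬ ((n/2+2) = n/2+1) by omega), if_pos (show (n/2+2) = n/2+2 by omega)]
          rw [phi_eval m n hn 0 _ _ (by push_cast; omega) (by push_cast; omega), if_pos evenZ0]
          rw [Prod.mk.injEq]
          refine ⟨?_, by omega⟩
          rw [hmM, ← ht]
          try congr 1
          all_goals omega
        · -- c = n+3+r, o = r+1
          obtain ⟨t, htM, ht⟩ := key2 M hM0 ((r:ℤ)+1) u hu0 (by omega) (by omega)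
          refine ⟨2*n*t + (n+3+r), by have h3 := idx_lt (2*n) t (n+3+r) M htM (by omega); omega, ?_⟩
          obtain ⟨d1, d2⟩ := dm_eq (2*n) t (n+3+r) (2*n*t + (n+3+r)) hn2 (by omega) rfl
          simp only [ite_true, fG, d1, d2, if_neg (show ¬ ((n+3+r) < n/2) by omega), if_neg (show ¬ ((n+3+r) = n/2) by omega), if_neg (show ¬ ((n+3+r) = n/2+1) by omega), if_neg (show ¬ ((n+3+r) = n/2+2) by omega), if_neg (show ¬ ((n+3+r) ≤ n+2) by omega), if_neg (show ¬ ((n+3+r) = n+3) by omega), if_pos (show (n+3+r) ≤ n+n/2+1 by omega)]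
          rw [phi_eval m n hn 0 _ _ (by push_cast; omega) (by push_cast; omega), if_pos evenZ0]
          rw [Prod.mk.injEq]
          refine ⟨?_, by omega⟩
          rw [hmM, ← ht]
          try congr 1
          all_goals omega
    · rcases (by omega : r = n/2 - 1 ∨ r ≤ n/2 - 2) with h0 | h0
      · rcases Int.even_or_odd (u - (((n/2 : ℕ):ℤ)+1)) with ⟨w, hw⟩ | ⟨w, hw⟩
        · -- c = n/2, o = n/2+1
          obtain ⟨t, htM, ht⟩ := key2 M hM0 (((n/2 : ℕ):ℤ)+1) u hu0 (by omega) (by omega)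
          refine ⟨2*n*t + (n/2), by have h3 := idx_lt (2*n) t (n/2) M htM (by omega); omega, ?_⟩
          obtain ⟨d1, d2⟩ := dm_eq (2*n) t (n/2) (2*n*t + (n/2)) hn2 (by omega) rfl
          simp only [ite_true, fG, d1, d2, if_neg (show ¬ ((n/2) < n/2) by omega), if_pos (show (n/2) = n/2 by omega)]
          rw [phi_eval m n hn 0 _ _ (by push_cast; omega) (by push_cast; omega), if_pos evenZ0]
          rw [Prod.mk.injEq]
          refine ⟨?_, by omega⟩
          rw [hmM, ← ht]
          try congr 1
          all_goals omega
        · -- c = n/2+3, o = n/2+2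
          obtain ⟨t, htM, ht⟩ := key2 M hM0 (((n/2 : ℕ):ℤ)+2) u hu0 (by omega) (by omega)
          refine ⟨2*n*t + (n/2+3), by have h3 := idx_lt (2*n) t (n/2+3) M htM (by omega); omega, ?_⟩
          obtain ⟨d1, d2⟩ := dm_eq (2*n) t (n/2+3) (2*n*t + (n/2+3)) hn2 (by omega) rfl
          simp only [ite_true, fG, d1, d2, if_neg (show ¬ ((n/2+3) < n/2) by omega), if_neg (show ¬ ((n/2+3) = n/2) by omega), if_neg (show ¬ ((n/2+3) = n/2+1) by omega), if_neg (show ¬ ((n/2+3) = n/2+2) by omega), if_pos (show (n/2+3) ≤ n+2 by omega)]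
          rw [phi_eval m n hn 0 _ _ (by push_cast; omega) (by push_cast; omega), if_pos evenZ0]
          rw [Prod.mk.injEq]
          refine ⟨?_, by omega⟩
          rw [hmM, ← ht]
          try congr 1
          all_goals omega
      · rcases Int.even_or_odd (u - ((r:ℤ)+3)) with ⟨w, hw⟩ | ⟨w, hw⟩
        · -- c = n+2-r, o = r+3
          obtain ⟨t, htM, ht⟩ := key2 M hM0 ((r:ℤ)+3) u hu0 (by omega) (by omega)
          refine ⟨2*n*t + (n+2-r), by have h3 := idx_lt (2*n) t (n+2-r) M htM (by omega); omega, ?_⟩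
          obtain ⟨d1, d2⟩ := dm_eq (2*n) t (n+2-r) (2*n*t + (n+2-r)) hn2 (by omega) rfl
          simp only [ite_true, fG, d1, d2, if_neg (show ¬ ((n+2-r) < n/2) by omega), if_neg (show ¬ ((n+2-r) = n/2) by omega), if_neg (show ¬ ((n+2-r) = n/2+1) by omega), if_neg (show ¬ ((n+2-r) = n/2+2) by omega), if_pos (show (n+2-r) ≤ n+2 by omega)]
          rw [phi_eval m n hn 0 _ _ (by push_cast; omega) (by push_cast; omega), if_pos evenZ0]
          rw [Prod.mk.injEq]
          refine ⟨?_, by omega⟩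
          rw [hmM, ← ht]
          try congr 1
          all_goals omega
        · rcases (by omega : r = n/2 - 2 ∨ r ≤ n/2 - 3) with h1 | h1
          · -- c = n/2+1, o = r+4
            obtain ⟨t, htM, ht⟩ := key2 M hM0 ((r:ℤ)+4) u hu0 (by omega) (by omega)
            refine ⟨2*n*t + (n/2+1), by have h3 := idx_lt (2*n) t (n/2+1) M htM (by omega); omega, ?_⟩
            obtain ⟨d1, d2⟩ := dm_eq (2*n) t (n/2+1) (2*n*t + (n/2+1)) hn2 (by omega) rfl
            simp only [ite_true, fG, d1, d2, if_neg (show ¬ ((n/2+1) < n/2) by omega), if_neg (show ¬ ((n/2+1) = n/2) by omega), if_pos (show (n/2+1) = n/2+1 by omega)]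
            rw [phi_eval m n hn 0 _ _ (by push_cast; omega) (by push_cast; omega), if_pos evenZ0]
            rw [Prod.mk.injEq]
            refine ⟨?_, by omega⟩
            rw [hmM, ← ht]
            try congr 1
            all_goals omega
          · -- c = 2*n-1-r, o = r+4
            obtain ⟨t, htM, ht⟩ := key2 M hM0 ((r:ℤ)+4) u hu0 (by omega) (by omega)
            refine ⟨2*n*t + (2*n-1-r), by have h3 := idx_lt (2*n) t (2*n-1-r) M htM (by omega); omega, ?_⟩
            obtain ⟨d1, d2⟩ := dm_eq (2*n) t (2*n-1-r) (2*n*t + (2*n-1-r)) hn2 (by omega) rfl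
            simp only [ite_true, fG, d1, d2, if_neg (show ¬ ((2*n-1-r) < n/2) by omega), if_neg (show ¬ ((2*n-1-r) = n/2) by omega), if_neg (show ¬ ((2*n-1-r) = n/2+1) by omega), if_neg (show ¬ ((2*n-1-r) = n/2+2) by omega), if_neg (show ¬ ((2*n-1-r) ≤ n+2) by omega), if_neg (show ¬ ((2*n-1-r) = n+3) by omega), if_neg (show ¬ ((2*n-1-r) ≤ n+n/2+1) by omega)]
            rw [phi_eval m n hn 0 _ _ (by push_cast; omega) (by push_cast; omega), if_pos evenZ0]
            rw [Prod.mk.injEq]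
            refine ⟨?_, by omega⟩
            rw [hmM, ← ht]
            try congr 1
            all_goals omega
end KleinTour

/-- Watkins' theorem: for all positive `m, n`, the `m × n` Klein bottle board admits a
closed knight's tour: a walk in the knight's graph on `ℤ²` of length `mn` whose endpoints
project to the same board square and whose projection visits every board square exactly
once (for `m = n = 1` this is a single loop edge). -/
theorem klein_always_has_tour (m n : ℕ) (hm : 0 < m) (hn : 0 < n) :
    ∃ (s e : ℤ × ℤ) (w : knightGraph.Walk s e),
      phi m n s = phi m n e ∧ w.length = m * n ∧
      ∀ q ∈ boardSet m n, ∃! i : Fin (m * n), phi m n (w.getVert i) = q := by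
  rcases Nat.mod_two_eq_zero_or_one n with hn2 | hn2
  · -- n even
    by_cases hne2 : n = 2
    · subst hne2
      rcases Nat.mod_two_eq_zero_or_one m with hm2 | hm2
      · exact KleinTour.famC m hm hm2
      · exact KleinTour.famB m hm hm2
    · rcases Nat.mod_two_eq_zero_or_one m with hm2 | hm2
      · by_cases hne4 : n = 4
        · subst hne4
          exact KleinTour.famH m hm hm2
        · exact KleinTour.famG m n hm hm2 hn2 (by omega)
      · exact KleinTour.famE m n hm hm2 hn2 (by omega)
  · -- n odd
    by_cases hne1 : n = 1
    · subst hne1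
      exact KleinTour.famA m hm
    · exact KleinTour.famD m n hm hn2 (by omega)
end
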